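/- arXiv:2303.18158 — 7 statements merged into one kernel-verified Lean document; each statement's English description precedes it below -/
import Mathlib

section
/- Let h : ℝ^d → ℝ ∪ {+∞} be a proper, lower semicontinuous, convex function with h(0) = 0. Then the closure of epi(h⁺) equals epi(h^π). If, in addition, the epigraph epi(h) = {(t, x) ∈ ℝ × ℝ^d : h(x) ≤ t} contains no line, then epi(h^π) is a pointed cone, i.e., if both v and −v belong to epi(h^π) then v = 0. -/
/-!
Let `E` be the epigraph of `h` over real heights: a closed convex set containing the origin.
For `w > 0`, `(t, x, w)` lies in the epigraph of either perspective iff `w⁻¹ • (t, x) ∈ E`.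
Because `E` is star-shaped at the origin, `s ↦ s · h(x / s)` is antitone on `(0, ∞)`, so the
limit defining `h^π(x, 0)` is a supremum, and `h^π(x, 0) ≤ t` iff the open ray
`{s • (t, x) | s > 0}` lies in `E`. Both cases merge into the single condition
`0 ≤ w ∧ ∀ s > 0, s * w < 1 → s • (t, x) ∈ E`, which shows that `epi h^π` is closed. It contains
`epi h⁺`, and each of its points with `w = 0` is the limit of the points `(t, x, s) ∈ epi h⁺`
as `s ↓ 0`. Finally, if `±(t, x, w) ∈ epi h^π` then `w = 0` and the rays through `(t, x)` and
`-(t, x)` both lie in `E`, so `E` contains the line through the origin spanned by `(t, x)`.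
-/

open scoped Classical

/-- The perspective function `h⁺` of a function `h : ℝ^d → ℝ ∪ {+∞}`. -/
noncomputable def persp {d : ℕ} (h : (Fin d → ℝ) → EReal) (x : Fin d → ℝ) (w : ℝ) : EReal :=
  if 0 < w then (w : EReal) * h (w⁻¹ • x)
  else if w = 0 ∧ x = 0 then 0
  else ⊤

/-- The closure `h^π` of the perspective function: at `w = 0` it is the limit
`lim_{s ↓ 0} s · h(x / s)`. -/
noncomputable def perspCl {d : ℕ} (h : (Fin d → ℝ) → EReal) (x : Fin d → ℝ) (w : ℝ) : EReal :=
  if 0 < w then (w : EReal) * h (w⁻¹ • x)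
  else if w = 0 then
    Filter.limUnder (nhdsWithin (0 : ℝ) (Set.Ioi 0)) (fun s : ℝ => (s : EReal) * h (s⁻¹ • x))
  else ⊤

/-- The epigraph of the perspective function, a subset of `ℝ × ℝ^d × [0, ∞)`. -/
def epiPersp {d : ℕ} (h : (Fin d → ℝ) → EReal) : Set (ℝ × (Fin d → ℝ) × ℝ) :=
  {p | 0 ≤ p.2.2 ∧ persp h p.2.1 p.2.2 ≤ (p.1 : EReal)}

/-- The epigraph of the closure of the perspective function. -/
def epiPerspCl {d : ℕ} (h : (Fin d → ℝ) → EReal) : Set (ℝ × (Fin d → ℝ) × ℝ) :=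
  {p | 0 ≤ p.2.2 ∧ perspCl h p.2.1 p.2.2 ≤ (p.1 : EReal)}

open Filter Set Topology

lemma IsClosed.smul_mem_of_forall_Ioo {W : Type*} [TopologicalSpace W] [SMul ℝ W]
    [ContinuousSMul ℝ W] {C : Set W} (hC : IsClosed C) {a : ℝ} (ha : 0 < a) {p : W}
    (hp : ∀ s ∈ Ioo 0 a, s • p ∈ C) : a • p ∈ C :=
  hC.mem_of_tendsto ((continuous_id.smul continuous_const).tendsto a |>.mono_left
    nhdsWithin_le_nhds) (eventually_of_mem (Ioo_mem_nhdsLT ha) hp)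

lemma EReal.coe_mul_le_coe_iff {s : ℝ} (hs : 0 < s) (a : EReal) (t : ℝ) :
    (s : EReal) * a ≤ t ↔ a ≤ ((s⁻¹ * t : ℝ) : EReal) := by
  rw [inv_mul_eq_div, EReal.coe_div, EReal.le_div_iff_mul_le (by exact_mod_cast hs)
    (EReal.coe_ne_top s), mul_comm]

section RealEpigraph

variable {V : Type*} {h : V → EReal}

def realEpigraph (h : V → EReal) : Set (ℝ × V) :=
  {p | h p.2 ≤ (p.1 : EReal)}

lemma zero_mem_realEpigraph [Zero V] (h0 : h 0 ≤ 0) : (0 : ℝ × V) ∈ realEpigraph h := h0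

lemma LowerSemicontinuous.isClosed_realEpigraph [TopologicalSpace V]
    (hlsc : LowerSemicontinuous h) : IsClosed (realEpigraph h) :=
  hlsc.isClosed_epigraph.preimage
    (continuous_snd.prodMk (continuous_coe_real_ereal.comp continuous_fst))

lemma coe_mul_apply_inv_smul_le_iff [SMul ℝ V] {s : ℝ} (hs : 0 < s) (t : ℝ) (x : V) :
    (s : EReal) * h (s⁻¹ • x) ≤ t ↔ s⁻¹ • (t, x) ∈ realEpigraph h :=
  EReal.coe_mul_le_coe_iff hs _ t

lemma antitoneOn_coe_mul_apply_inv_smul [AddCommGroup V] [Module ℝ V]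
    (hconv : Convex ℝ (realEpigraph h)) (h0 : h 0 ≤ 0)
    (x : V) : AntitoneOn (fun s : ℝ => (s : EReal) * h (s⁻¹ • x)) (Ioi 0) := by
  intro s (hs : 0 < s) s' (hs' : 0 < s') hss'
  refine EReal.le_of_forall_lt_iff_le.1 fun t ht => ?_
  have hmem := (coe_mul_apply_inv_smul_le_iff hs t x).1 ht.le
  have hscale : s'⁻¹ • ((t, x) : ℝ × V) = (s / s') • s⁻¹ • (t, x) := by
    rw [smul_smul]
    congr 1
    field_simp
  rw [coe_mul_apply_inv_smul_le_iff hs', hscale]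
  exact hconv.smul_mem_of_zero_mem (zero_mem_realEpigraph h0) hmem
    ⟨div_nonneg (le_of_lt hs) (le_of_lt hs'), div_le_one_of_le₀ hss' (le_of_lt hs')⟩

end RealEpigraph

section Perspective

variable {d : ℕ} {h : (Fin d → ℝ) → EReal}

lemma persp_le_iff_of_pos {x : Fin d → ℝ} {w : ℝ} (hw : 0 < w) (t : ℝ) :
    persp h x w ≤ t ↔ w⁻¹ • (t, x) ∈ realEpigraph h := by
  rw [persp, if_pos hw, coe_mul_apply_inv_smul_le_iff hw]

lemma perspCl_le_iff_of_pos {x : Fin d → ℝ} {w : ℝ} (hw : 0 < w) (t : ℝ) :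
    perspCl h x w ≤ t ↔ w⁻¹ • (t, x) ∈ realEpigraph h := by
  rw [perspCl, if_pos hw, coe_mul_apply_inv_smul_le_iff hw]

lemma perspCl_zero_le_iff (hconv : Convex ℝ (realEpigraph h)) (h0 : h 0 ≤ 0)
    (x : Fin d → ℝ) (t : ℝ) :
    perspCl h x 0 ≤ t ↔ ∀ s : ℝ, 0 < s → s • (t, x) ∈ realEpigraph h := by
  have hsup : perspCl h x 0 = sSup ((fun s : ℝ => (s : EReal) * h (s⁻¹ • x)) '' Ioi 0) := by
    rw [perspCl, if_neg (lt_irrefl 0), if_pos rfl]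
    exact ((antitoneOn_coe_mul_apply_inv_smul hconv h0 x).tendsto_nhdsGT
      (OrderTop.bddAbove _)).limUnder_eq
  rw [hsup, sSup_le_iff, forall_mem_image]
  constructor
  · intro H s hs
    simpa only [inv_inv] using
      (coe_mul_apply_inv_smul_le_iff (inv_pos.2 hs) t x).1 (H (inv_pos.2 hs))
  · intro H s hs
    exact (coe_mul_apply_inv_smul_le_iff hs t x).2 (H _ (inv_pos.2 hs))

lemma mem_epiPerspCl_iff (hclosed : IsClosed (realEpigraph h))
    (hconv : Convex ℝ (realEpigraph h)) (h0 : h 0 ≤ 0) {p : ℝ × (Fin d → ℝ) × ℝ} :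
    p ∈ epiPerspCl h ↔
      0 ≤ p.2.2 ∧ ∀ s : ℝ, 0 < s → s * p.2.2 < 1 → s • (p.1, p.2.1) ∈ realEpigraph h := by
  obtain ⟨t, x, w⟩ := p
  refine and_congr_right fun hw => ?_
  rcases hw.eq_or_lt with rfl | hw
  · simp only [mul_zero, zero_lt_one, forall_const]
    exact perspCl_zero_le_iff hconv h0 x t
  rw [perspCl_le_iff_of_pos hw]
  constructor
  · intro hmem s hs hsw
    have hscale : s • ((t, x) : ℝ × (Fin d → ℝ)) = (s * w) • w⁻¹ • (t, x) := by
      rw [smul_smul, mul_assoc, mul_inv_cancel₀ (ne_of_gt hw), mul_one]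
    rw [hscale]
    exact hconv.smul_mem_of_zero_mem (zero_mem_realEpigraph h0) hmem
      ⟨by positivity, le_of_lt hsw⟩
  · intro H
    refine hclosed.smul_mem_of_forall_Ioo (inv_pos.2 hw) fun s hs => H s hs.1 ?_
    simpa only [inv_mul_cancel₀ (ne_of_gt hw)] using mul_lt_mul_of_pos_right hs.2 hw

lemma isClosed_epiPerspCl (hclosed : IsClosed (realEpigraph h))
    (hconv : Convex ℝ (realEpigraph h)) (h0 : h 0 ≤ 0) : IsClosed (epiPerspCl h) := by
  have hrepr : epiPerspCl h = {p | 0 ≤ p.2.2} ∩ ⋂ s > (0 : ℝ),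
      ({p | 1 ≤ s * p.2.2} ∪ {p | s • (p.1, p.2.1) ∈ realEpigraph h}) := by
    ext p
    simp only [mem_epiPerspCl_iff hclosed hconv h0, mem_inter_iff, mem_iInter, mem_union,
      mem_ofPred_eq, ← not_lt, or_iff_not_imp_left, not_not]
  rw [hrepr]
  exact (isClosed_le continuous_const (by fun_prop)).inter <| isClosed_biInter fun s _ =>
    (isClosed_le continuous_const (by fun_prop)).union (hclosed.preimage (by fun_prop))

lemma epiPersp_subset_epiPerspCl (hconv : Convex ℝ (realEpigraph h)) (h0 : h 0 ≤ 0) :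
    epiPersp h ⊆ epiPerspCl h := by
  rintro ⟨t, x, w⟩ ⟨hw, hle⟩
  refine ⟨hw, ?_⟩
  rcases hw.eq_or_lt with rfl | hw
  · have hx : x = 0 ∧ 0 ≤ t := by
      by_contra hx
      simp only [persp, lt_irrefl, if_false, true_and] at hle
      split_ifs at hle with hx0
      · exact hx ⟨hx0, by exact_mod_cast hle⟩
      · exact EReal.coe_ne_top t (top_le_iff.1 hle)
    obtain ⟨rfl, ht⟩ := hx
    refine (perspCl_zero_le_iff hconv h0 0 t).2 fun s hs => ?_
    change h (s • 0) ≤ ((s * t : ℝ) : EReal)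
    rw [smul_zero]
    exact h0.trans (by exact_mod_cast mul_nonneg (le_of_lt hs) ht)
  · rwa [perspCl_le_iff_of_pos hw, ← persp_le_iff_of_pos hw]

lemma epiPerspCl_subset_closure_epiPersp (hconv : Convex ℝ (realEpigraph h)) (h0 : h 0 ≤ 0) :
    epiPerspCl h ⊆ closure (epiPersp h) := by
  rintro ⟨t, x, w⟩ ⟨hw, hle⟩
  rcases hw.eq_or_lt with rfl | hw
  · have hray := (perspCl_zero_le_iff hconv h0 x t).1 hle
    have htend : Tendsto (fun s : ℝ => (t, x, s)) (𝓝[>] 0) (𝓝 (t, x, 0)) :=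
      tendsto_const_nhds.prodMk_nhds (tendsto_const_nhds.prodMk_nhds
        (tendsto_id.mono_left nhdsWithin_le_nhds))
    refine mem_closure_of_tendsto htend (eventually_nhdsWithin_of_forall fun s hs => ?_)
    exact ⟨le_of_lt hs, (persp_le_iff_of_pos hs t).2 (hray _ (inv_pos.2 hs))⟩
  · refine subset_closure ⟨le_of_lt hw, ?_⟩
    rwa [persp_le_iff_of_pos hw, ← perspCl_le_iff_of_pos hw]

lemma closure_epiPersp_eq_epiPerspCl (hclosed : IsClosed (realEpigraph h))
    (hconv : Convex ℝ (realEpigraph h)) (h0 : h 0 ≤ 0) :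
    closure (epiPersp h) = epiPerspCl h :=
  (closure_minimal (epiPersp_subset_epiPerspCl hconv h0)
    (isClosed_epiPerspCl hclosed hconv h0)).antisymm
    (epiPerspCl_subset_closure_epiPersp hconv h0)

lemma eq_zero_of_mem_epiPerspCl_of_neg_mem (hconv : Convex ℝ (realEpigraph h)) (h0 : h 0 ≤ 0)
    (hline : ∀ u : ℝ × (Fin d → ℝ), (∀ τ : ℝ, τ • u ∈ realEpigraph h) → u = 0)
    {v : ℝ × (Fin d → ℝ) × ℝ} (hv : v ∈ epiPerspCl h) (hnv : -v ∈ epiPerspCl h) : v = 0 := by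
  obtain ⟨t, x, w⟩ := v
  obtain ⟨hw, hle⟩ := hv
  obtain ⟨hnw, hnle⟩ := hnv
  obtain rfl : w = 0 := le_antisymm (neg_nonneg.1 hnw) hw
  have hpos := (perspCl_zero_le_iff hconv h0 x t).1 hle
  have hneg := (perspCl_zero_le_iff hconv h0 (-x) (-t)).1 (by simpa using hnle)
  have htx : ((t, x) : ℝ × (Fin d → ℝ)) = 0 := by
    refine hline _ fun τ => ?_
    rcases lt_trichotomy τ 0 with hτ | rfl | hτ
    · simpa [Prod.smul_mk] using hneg (-τ) (neg_pos.2 hτ)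
    · simpa only [zero_smul] using zero_mem_realEpigraph h0
    · exact hpos τ hτ
  obtain ⟨rfl, rfl⟩ := Prod.mk_eq_zero.1 htx
  rfl

end Perspective

theorem closure_epiPersp_eq_and_pointed_general {d : ℕ} (h : (Fin d → ℝ) → EReal)
    (hlsc : LowerSemicontinuous h)
    (hconv : Convex ℝ {p : ℝ × (Fin d → ℝ) | h p.2 ≤ (p.1 : EReal)})
    (h0 : h 0 = 0) :
    closure (epiPersp h) = epiPerspCl h ∧
      ((¬ ∃ (p v : ℝ × (Fin d → ℝ)), v ≠ 0 ∧
          ∀ t : ℝ, p + t • v ∈ {q : ℝ × (Fin d → ℝ) | h q.2 ≤ (q.1 : EReal)}) →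
        ∀ v ∈ epiPerspCl h, -v ∈ epiPerspCl h → v = 0) := by
  have hconv' : Convex ℝ (realEpigraph h) := hconv
  have h0' : h 0 ≤ 0 := h0.le
  refine ⟨closure_epiPersp_eq_epiPerspCl hlsc.isClosed_realEpigraph hconv' h0', ?_⟩
  intro hnoline v hv hnv
  refine eq_zero_of_mem_epiPerspCl_of_neg_mem hconv' h0' (fun u hu => ?_) hv hnv
  by_contra hu0
  exact hnoline ⟨0, u, hu0, by simpa only [zero_add, realEpigraph] using hu⟩

/-- If `h : ℝ^d → ℝ ∪ {+∞}` is proper, lower semicontinuous and convex with `h 0 = 0`,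
then `cl (epi h⁺) = epi h^π`; if moreover `epi h` contains no line, then `epi h^π`
is pointed. -/
theorem closure_epiPersp_eq_and_pointed {d : ℕ} (h : (Fin d → ℝ) → EReal)
    (hbot : ∀ x, h x ≠ ⊥) (hnetop : ∃ x, h x ≠ ⊤)
    (hlsc : LowerSemicontinuous h)
    (hconv : Convex ℝ {p : ℝ × (Fin d → ℝ) | h p.2 ≤ (p.1 : EReal)})
    (h0 : h 0 = 0) :
    closure (epiPersp h) = epiPerspCl h ∧
      ((¬ ∃ (p v : ℝ × (Fin d → ℝ)), v ≠ 0 ∧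
          ∀ t : ℝ, p + t • v ∈ {q : ℝ × (Fin d → ℝ) | h q.2 ≤ (q.1 : EReal)}) →
        ∀ v ∈ epiPerspCl h, -v ∈ epiPerspCl h → v = 0) :=
  closure_epiPersp_eq_and_pointed_general h hlsc hconv h0
end

section
/- Let Δ ⊆ {0,1}^n (viewed as a subset of ℝ^n) and, for each i ∈ [p] with p ≤ n, let K_i ⊆ ℝ^{k_i} be a convex cone containing the origin. Then conv(S(Δ, K)) = S(conv(Δ), K), where conv denotes the convex hull. -/
open scoped Classical

/-- Convex hull of a conic mixed-binary set: `conv(S(Δ, K)) = S(conv(Δ), K)` whenever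
`Δ ⊆ {0,1}ⁿ` and each `K i` is a convex cone containing the origin. -/
theorem convexHull_conic_mixed_binary {n p : ℕ} (hp : 0 < p) (hpn : p ≤ n)
    (m k : Fin p → ℕ)
    (A : ∀ i : Fin p, (Fin (m i) → ℝ) →ₗ[ℝ] (Fin (k i) → ℝ))
    (B : ∀ i : Fin p, Fin (k i) → ℝ)
    (K : ∀ i : Fin p, Set (Fin (k i) → ℝ))
    (Δ : Set (Fin n → ℝ))
    (hΔ : ∀ δ ∈ Δ, ∀ j : Fin n, δ j = 0 ∨ δ j = 1)
    (hKconv : ∀ i, Convex ℝ (K i))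
    (hK0 : ∀ i, (0 : Fin (k i) → ℝ) ∈ K i)
    (hKcone : ∀ i, ∀ c ∈ K i, ∀ lam : ℝ, 0 < lam → lam • c ∈ K i) :
    convexHull ℝ {q : (∀ i : Fin p, Fin (m i) → ℝ) × (Fin n → ℝ) |
        q.2 ∈ Δ ∧ ∀ i : Fin p, A i (q.1 i) + q.2 (Fin.castLE hpn i) • B i ∈ K i}
      = {q : (∀ i : Fin p, Fin (m i) → ℝ) × (Fin n → ℝ) |
        q.2 ∈ convexHull ℝ Δ ∧ ∀ i : Fin p, A i (q.1 i) + q.2 (Fin.castLE hpn i) • B i ∈ K i} := by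
  apply Set.Subset.antisymm
  · apply convexHull_min
    · rintro q ⟨h1, h2⟩
      exact ⟨subset_convexHull ℝ Δ h1, h2⟩
    · rintro q1 ⟨hq1, hc1⟩ q2 ⟨hq2, hc2⟩ a b ha hb hab
      refine ⟨(convex_convexHull ℝ Δ) hq1 hq2 ha hb hab, fun i => ?_⟩
      have hK := (hKconv i) (hc1 i) (hc2 i) ha hb hab
      convert hK using 1
      simp only [Prod.fst_add, Prod.snd_add, Prod.smul_fst, Prod.smul_snd,
        Pi.add_apply, Pi.smul_apply, map_add, map_smul, smul_eq_mul]
      module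
  · rintro ⟨α, δ⟩ ⟨hδ, hcon⟩
    rw [convexHull_eq] at hδ
    obtain ⟨ι, t, w, z, hw₀, hw₁, hz, hcm⟩ := hδ
    have hcon' : ∀ i : Fin p, A i (α i) + δ (Fin.castLE hpn i) • B i ∈ K i := hcon
    have hcm' : t.centerMass w z = δ := hcm
    set t' := t.filter (fun j => w j ≠ 0) with ht'
    have ht'sub : t' ⊆ t := Finset.filter_subset _ _
    have hw₀' : ∀ j ∈ t', 0 ≤ w j := fun j hj => hw₀ j (ht'sub hj)
    have hw₁' : ∑ j ∈ t', w j = 1 := by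
      rw [ht', Finset.sum_filter_ne_zero, hw₁]
    have hδeq : δ = ∑ j ∈ t', w j • z j := by
      rw [← hcm', Finset.centerMass_eq_of_sum_1 _ _ hw₁]
      rw [ht', Finset.sum_filter_of_ne]
      intro x _ hx
      intro hwx
      exact hx (by rw [hwx, zero_smul])
    have hδi : ∀ r : Fin n, δ r = ∑ j ∈ t', w j * z j r := by
      intro r
      rw [hδeq]
      simp [Finset.sum_apply]
    have hz01 : ∀ j ∈ t', ∀ r : Fin n, z j r = 0 ∨ z j r = 1 := by
      intro j hj r
      exact hΔ (z j) (hz j (ht'sub hj)) r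
    have hδnn : ∀ r : Fin n, 0 ≤ δ r := by
      intro r
      rw [hδi r]
      apply Finset.sum_nonneg
      intro j hj
      have := hz01 j hj r
      rcases this with h | h <;> simp [h]
      exact hw₀' j hj
    -- construction of the blocks
    set ζ : ι → ∀ i : Fin p, Fin (m i) → ℝ := fun j i =>
      if δ (Fin.castLE hpn i) = 0 then α i
      else (z j (Fin.castLE hpn i) / δ (Fin.castLE hpn i)) • α i with hζ
    -- each point lies in the base set
    have hmem : ∀ j ∈ t', ((ζ j, z j) :
        (∀ i : Fin p, Fin (m i) → ℝ) × (Fin n → ℝ)) ∈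
        {q : (∀ i : Fin p, Fin (m i) → ℝ) × (Fin n → ℝ) |
        q.2 ∈ Δ ∧ ∀ i : Fin p, A i (q.1 i) + q.2 (Fin.castLE hpn i) • B i ∈ K i} := by
      intro j hj
      refine ⟨hz j (ht'sub hj), fun i => ?_⟩
      set c := δ (Fin.castLE hpn i) with hc
      by_cases h0 : c = 0
      · -- all z j at this coord must be 0
        have hzero : z j (Fin.castLE hpn i) = 0 := by
          have hsum : ∑ j' ∈ t', w j' * z j' (Fin.castLE hpn i) = 0 := by
            rw [← hδi]; exact h0
          have hterm : w j * z j (Fin.castLE hpn i) = 0 := by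
            refine (Finset.sum_eq_zero_iff_of_nonneg ?_).mp hsum j hj
            intro j' hj'
            rcases hz01 j' hj' (Fin.castLE hpn i) with h | h <;> simp [h]
            exact hw₀' j' hj'
          have hwj : w j ≠ 0 := (Finset.mem_filter.mp hj).2
          exact (mul_eq_zero.mp hterm).resolve_left hwj
        simp only [hζ, h0, ← hc, if_pos]
        rw [hzero, zero_smul, add_zero]
        have := hcon' i
        rw [← hc, h0, zero_smul, add_zero] at this
        exact this
      · have hcpos : 0 < c := lt_of_le_of_ne (hδnn _) (Ne.symm h0)
        rcases hz01 j hj (Fin.castLE hpn i) with h | h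
        · simp only [hζ, ← hc, if_neg h0]
          rw [h, zero_smul, zero_div, zero_smul, map_zero, add_zero]
          exact hK0 i
        · simp only [hζ, ← hc, if_neg h0]
          rw [h]
          have key : A i ((1 / c) • α i) + (1 : ℝ) • B i
              = c⁻¹ • (A i (α i) + c • B i) := by
            rw [map_smul]
            rw [smul_add, smul_smul, inv_mul_cancel₀ h0]
            simp
          rw [key]
          exact hKcone i _ (by rw [hc]; exact hcon' i) c⁻¹ (inv_pos.mpr hcpos)
    -- the convex combination recovers (α, δ)
    have hsum : ∑ j ∈ t', w j • ((ζ j, z j) :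
        (∀ i : Fin p, Fin (m i) → ℝ) × (Fin n → ℝ)) = (α, δ) := by
      rw [Prod.ext_iff]
      constructor
      · rw [Prod.fst_sum]
        funext i
        rw [Finset.sum_apply]
        by_cases h0 : δ (Fin.castLE hpn i) = 0
        · simp only [hζ, Prod.smul_fst, Pi.smul_apply, if_pos h0]
          rw [← Finset.sum_smul, hw₁', one_smul]
        · simp only [hζ, Prod.smul_fst, Pi.smul_apply, if_neg h0]
          have : ∀ j ∈ t', w j • ((z j (Fin.castLE hpn i) / δ (Fin.castLE hpn i)) • α i)
              = (w j * z j (Fin.castLE hpn i) / δ (Fin.castLE hpn i)) • α i := by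
            intro j hj
            rw [smul_smul]
            ring_nf
          rw [Finset.sum_congr rfl this, ← Finset.sum_smul]
          have : ∑ j ∈ t', w j * z j (Fin.castLE hpn i) / δ (Fin.castLE hpn i)
              = (∑ j ∈ t', w j * z j (Fin.castLE hpn i)) / δ (Fin.castLE hpn i) := by
            rw [Finset.sum_div]
          rw [this, ← hδi, div_self h0, one_smul]
      · rw [Prod.snd_sum]
        simp only [Prod.smul_snd]
        exact hδeq.symm
    rw [← hsum]
    have := Finset.centerMass_mem_convexHull (t := t')
      (w := w) (z := fun j => ((ζ j, z j) :
        (∀ i : Fin p, Fin (m i) → ℝ) × (Fin n → ℝ)))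
      hw₀' (by rw [hw₁']; norm_num) hmem
    rwa [Finset.centerMass_eq_of_sum_1 _ _ hw₁'] at this
end

section
/- Let Δ ⊆ {0,1}^n and, for each i ∈ [p] with p ≤ n, let K_i ⊆ ℝ^{k_i} be a convex cone containing the origin. Assume: (a) for every i ∈ [p] there exists δ ∈ Δ with δ_i = 1; (b) for every i ∈ [p], every α_i ∈ ℝ^{m_i} and every δ_i > 0, if A_i α_i + δ_i · B_i lies in the closure cl(K_i) then it lies in K_i; and (c) B_i ∈ K_i for every i ∈ [p]. Then the closed convex hull of S(Δ, K) equals S(conv(Δ), cl(K)), i.e., cl(conv(S(Δ, K))) is exactly the set obtained from S(conv(Δ), K) by replacing each cone K_i with its closure cl(K_i). -/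
/-!
Every relation `A i α_i + δ_i B_i ∈ K i` is homogeneous in `(α_i, δ_i)`, so a point `(α, δ)` with
`δ = ∑ w_j z_j ∈ conv Δ` and all `δ_i > 0` splits as `∑ w_j (β_j, z_j)` with
`β_j i = (z_j i / δ_i) α_i`, and each `(β_j, z_j)` lies in `S(Δ, K)` because `K i` is a cone. Points of
`S(conv Δ, cl K)` with `δ_i > 0` are already in `S(conv Δ, K)` by (b). An arbitrary point of
`S(conv Δ, cl K)` is the limit of points on a segment towards `(0, δ₀)`, where `δ₀ ∈ conv Δ` is
positive on the first `p` coordinates by (a) and `(0, δ₀) ∈ S(conv Δ, K)` by (c). Finally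
`S(conv Δ, cl K)` is convex and, `Δ` being finite, closed.
-/

open Set

theorem Set.Finite.of_forall_eq_zero_or_eq_one {κ : Type*} [Finite κ] {s : Set (κ → ℝ)}
    (hs : ∀ x ∈ s, ∀ j, x j = 0 ∨ x j = 1) : s.Finite :=
  (Finite.pi' fun _ => toFinite {0, 1}).subset fun x hx j => hs x hx j

theorem exists_mem_convexHull_forall_pos {ι κ : Type*} [Finite ι] {s : Set (κ → ℝ)}
    (hs : s ⊆ Ici 0) (hne : s.Nonempty) {e : ι → κ} (he : ∀ i, ∃ x ∈ s, 0 < x (e i)) :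
    ∃ y ∈ convexHull ℝ s, ∀ i, 0 < y (e i) := by
  classical
  cases nonempty_fintype ι
  suffices ∀ I : Finset ι, ∃ y ∈ convexHull ℝ s, ∀ i ∈ I, 0 < y (e i) by
    simpa using this Finset.univ
  intro I
  induction I using Finset.induction_on with
  | empty => exact ⟨hne.some, subset_convexHull ℝ s hne.some_mem, by simp⟩
  | insert j I _ ih =>
    obtain ⟨y, hy, hypos⟩ := ih
    obtain ⟨x, hx, hxpos⟩ := he j
    have hy₀ : ∀ j, 0 ≤ y j := convexHull_min hs (convex_Ici 0) hy
    have hx₀ : ∀ j, 0 ≤ x j := hs hx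
    refine ⟨(1 / 2 : ℝ) • y + (1 / 2 : ℝ) • x, convex_convexHull ℝ s hy (subset_convexHull ℝ s hx)
      (by norm_num) (by norm_num) (by norm_num), ?_⟩
    simp only [Finset.forall_mem_insert, Pi.add_apply, Pi.smul_apply, smul_eq_mul]
    exact ⟨by linarith [hy₀ (e j)], fun i hi => by linarith [hypos i hi, hx₀ (e i)]⟩

namespace ConicMixedBinary

variable {ι κ : Type*} {E F : ι → Type*}
  [∀ i, AddCommGroup (E i)] [∀ i, Module ℝ (E i)] [∀ i, AddCommGroup (F i)] [∀ i, Module ℝ (F i)]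

/-- `S(D, K)`, where the block `α_i` is paired with the coordinate `δ (e i)`; the paper's `δ_i` is
`δ (Fin.castLE _ i)`. -/
def conicMixedBinarySet (A : ∀ i, E i →ₗ[ℝ] F i) (B : ∀ i, F i) (e : ι → κ)
    (D : Set (κ → ℝ)) (K : ∀ i, Set (F i)) : Set ((∀ i, E i) × (κ → ℝ)) :=
  {q | q.2 ∈ D ∧ ∀ i, A i (q.1 i) + q.2 (e i) • B i ∈ K i}

variable {A : ∀ i, E i →ₗ[ℝ] F i} {B : ∀ i, F i} {e : ι → κ} {D D' Δ : Set (κ → ℝ)}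
  {K K' : ∀ i, Set (F i)}

theorem conicMixedBinarySet_mono (hD : D ⊆ D') (hK : ∀ i, K i ⊆ K' i) :
    conicMixedBinarySet A B e D K ⊆ conicMixedBinarySet A B e D' K' :=
  fun _ hq => ⟨hD hq.1, fun i => hK i (hq.2 i)⟩

theorem convex_conicMixedBinarySet (hD : Convex ℝ D) (hK : ∀ i, Convex ℝ (K i)) :
    Convex ℝ (conicMixedBinarySet A B e D K) := by
  rintro q ⟨hqD, hqK⟩ r ⟨hrD, hrK⟩ a b ha hb hab
  refine ⟨hD hqD hrD ha hb hab, fun i => ?_⟩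
  convert (hK i) (hqK i) (hrK i) ha hb hab using 1
  simp only [Prod.fst_add, Prod.snd_add, Prod.smul_fst, Prod.smul_snd, Pi.add_apply,
    Pi.smul_apply, map_add, map_smul, smul_eq_mul]
  module

theorem isClosed_conicMixedBinarySet [∀ i, TopologicalSpace (E i)] [∀ i, TopologicalSpace (F i)]
    [∀ i, ContinuousAdd (F i)] [∀ i, ContinuousSMul ℝ (F i)] (hA : ∀ i, Continuous (A i))
    (hD : IsClosed D) (hK : ∀ i, IsClosed (K i)) :
    IsClosed (conicMixedBinarySet A B e D K) := by
  simp only [conicMixedBinarySet, ofPred_and, ofPred_forall]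
  exact (hD.preimage continuous_snd).inter <| isClosed_iInter fun i => (hK i).preimage <|
    ((hA i).comp ((continuous_apply i).comp continuous_fst)).add
      (((continuous_apply (e i)).comp continuous_snd).smul continuous_const)

theorem mem_convexHull_conicMixedBinarySet (hΔ : Δ ⊆ Ici 0)
    (hK : ∀ i, ∀ c ∈ K i, ∀ t : ℝ, 0 ≤ t → t • c ∈ K i) {q : (∀ i, E i) × (κ → ℝ)}
    (hq : q ∈ conicMixedBinarySet A B e (convexHull ℝ Δ) K) (hpos : ∀ i, 0 < q.2 (e i)) :
    q ∈ convexHull ℝ (conicMixedBinarySet A B e Δ K) := by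
  obtain ⟨α, δ⟩ := q
  obtain ⟨J, _, w, z, hw₀, hw₁, hzΔ, hδ⟩ := mem_convexHull_iff_exists_fintype.1 hq.1
  let β : J → ∀ i, E i := fun j i => (z j (e i) / δ (e i)) • α i
  refine mem_convexHull_of_exists_fintype w (fun j => (β j, z j)) hw₀ hw₁
    (fun j => ⟨hzΔ j, fun i => ?_⟩) ?_
  · have hscale : A i (β j i) + z j (e i) • B i
        = (z j (e i) / δ (e i)) • (A i (α i) + δ (e i) • B i) := by
      simp only [β, map_smul, smul_add, smul_smul, div_mul_cancel₀ _ (hpos i).ne']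
    rw [hscale]
    exact hK i _ (hq.2 i) _ (div_nonneg (hΔ (hzΔ j) (e i)) (hpos i).le)
  · refine Prod.ext (funext fun i => ?_) (by simpa only [Prod.snd_sum, Prod.smul_snd] using hδ)
    have hδi : ∑ j, w j * z j (e i) = δ (e i) := by simpa using congrFun hδ (e i)
    simp only [β, Prod.fst_sum, Prod.smul_fst, Finset.sum_apply, Pi.smul_apply, smul_smul,
      ← Finset.sum_smul, ← mul_div_assoc, ← Finset.sum_div, hδi, div_self (hpos i).ne', one_smul]

theorem mem_closure_convexHull_conicMixedBinarySet [∀ i, TopologicalSpace (F i)]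
    [∀ i, IsTopologicalAddGroup (F i)] [∀ i, ContinuousConstSMul ℝ (F i)]
    [∀ i, TopologicalSpace (E i)] [∀ i, ContinuousAdd (E i)] [∀ i, ContinuousSMul ℝ (E i)]
    (hΔ : Δ ⊆ Ici 0) (hKconv : ∀ i, Convex ℝ (K i))
    (hK : ∀ i, ∀ c ∈ K i, ∀ t : ℝ, 0 ≤ t → t • c ∈ K i)
    (hb : ∀ i, ∀ x : E i, ∀ t : ℝ, 0 < t → A i x + t • B i ∈ closure (K i) →
      A i x + t • B i ∈ K i)
    {q₀ : (∀ i, E i) × (κ → ℝ)} (hq₀ : q₀ ∈ conicMixedBinarySet A B e (convexHull ℝ Δ) K)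
    (hq₀pos : ∀ i, 0 < q₀.2 (e i)) {q : (∀ i, E i) × (κ → ℝ)}
    (hq : q ∈ conicMixedBinarySet A B e (convexHull ℝ Δ) fun i => closure (K i)) :
    q ∈ closure (convexHull ℝ (conicMixedBinarySet A B e Δ K)) := by
  refine closure_mono ?_ (segment_subset_closure_openSegment (right_mem_segment ℝ q₀ q))
  rintro _ ⟨a, b, ha, hb', hab, rfl⟩
  have hmem := convex_conicMixedBinarySet (convex_convexHull ℝ Δ) (fun i => (hKconv i).closure)
    (conicMixedBinarySet_mono subset_rfl (fun i => subset_closure) hq₀) hq ha.le hb'.le hab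
  have hpos : ∀ i, 0 < (a • q₀ + b • q).2 (e i) := fun i => by
    have hqi : 0 ≤ q.2 (e i) := convexHull_min hΔ (convex_Ici 0) hq.1 (e i)
    simp only [Prod.snd_add, Prod.smul_snd, Pi.add_apply, Pi.smul_apply, smul_eq_mul]
    exact add_pos_of_pos_of_nonneg (mul_pos ha (hq₀pos i)) (mul_nonneg hb'.le hqi)
  exact mem_convexHull_conicMixedBinarySet hΔ hK
    ⟨hmem.1, fun i => hb i _ _ (hpos i) (hmem.2 i)⟩ hpos

end ConicMixedBinary

open ConicMixedBinary in
theorem closure_convexHull_conic_mixed_binary_general {n p : ℕ} (hpn : p ≤ n)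
    (m k : Fin p → ℕ)
    (A : ∀ i : Fin p, (Fin (m i) → ℝ) →ₗ[ℝ] (Fin (k i) → ℝ))
    (B : ∀ i : Fin p, Fin (k i) → ℝ)
    (K : ∀ i : Fin p, Set (Fin (k i) → ℝ))
    (Δ : Set (Fin n → ℝ))
    (hΔ : ∀ δ ∈ Δ, ∀ j : Fin n, δ j = 0 ∨ δ j = 1)
    (hKconv : ∀ i, Convex ℝ (K i))
    (hK0 : ∀ i, (0 : Fin (k i) → ℝ) ∈ K i)
    (hKcone : ∀ i, ∀ c ∈ K i, ∀ lam : ℝ, 0 < lam → lam • c ∈ K i)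
    -- (a): for every `i` there is a point of `Δ` whose `i`-th coordinate is `1`
    (ha : ∀ i : Fin p, ∃ δ ∈ Δ, δ (Fin.castLE hpn i) = 1)
    -- (b): for `δ_i > 0`, membership in `cl(K i)` implies membership in `K i`
    (hb : ∀ i : Fin p, ∀ αi : Fin (m i) → ℝ, ∀ t : ℝ, 0 < t →
      A i αi + t • B i ∈ closure (K i) → A i αi + t • B i ∈ K i)
    -- (c): `B i ∈ K i`
    (hc : ∀ i : Fin p, B i ∈ K i) :
    closure (convexHull ℝ {q : (∀ i : Fin p, Fin (m i) → ℝ) × (Fin n → ℝ) |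
        q.2 ∈ Δ ∧ ∀ i : Fin p, A i (q.1 i) + q.2 (Fin.castLE hpn i) • B i ∈ K i})
      = {q : (∀ i : Fin p, Fin (m i) → ℝ) × (Fin n → ℝ) |
        q.2 ∈ convexHull ℝ Δ ∧
          ∀ i : Fin p, A i (q.1 i) + q.2 (Fin.castLE hpn i) • B i ∈ closure (K i)} := by
  change closure (convexHull ℝ (conicMixedBinarySet A B (Fin.castLE hpn) Δ K))
    = conicMixedBinarySet A B (Fin.castLE hpn) (convexHull ℝ Δ) fun i => closure (K i)
  have hΔ₀ : Δ ⊆ Ici 0 := fun δ hδ j => by rcases hΔ δ hδ j with h | h <;> simp [h]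
  have hK : ∀ i, ∀ c ∈ K i, ∀ t : ℝ, 0 ≤ t → t • c ∈ K i := fun i c hc t ht => by
    rcases ht.eq_or_lt with rfl | ht
    · simpa using hK0 i
    · exact hKcone i c hc t ht
  apply subset_antisymm
  · have hconvex := convex_conicMixedBinarySet (A := A) (B := B) (e := Fin.castLE hpn)
      (convex_convexHull ℝ Δ) fun i => (hKconv i).closure
    have hclosed := isClosed_conicMixedBinarySet (B := B) (e := Fin.castLE hpn)
      (fun i => (A i).continuous_of_finiteDimensional)
      ((Set.Finite.of_forall_eq_zero_or_eq_one hΔ).isClosed_convexHull ℝ)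
      fun i => isClosed_closure (s := K i)
    exact closure_minimal (convexHull_min
      (conicMixedBinarySet_mono (subset_convexHull ℝ Δ) fun i => subset_closure) hconvex) hclosed
  · intro q hq
    obtain ⟨δ₀, hδ₀, hδ₀pos⟩ := exists_mem_convexHull_forall_pos hΔ₀
      (convexHull_nonempty_iff.1 ⟨q.2, hq.1⟩) fun i => (ha i).imp fun _ h => ⟨h.1, h.2 ▸ one_pos⟩
    exact mem_closure_convexHull_conicMixedBinarySet hΔ₀ hKconv hK hb (q₀ := (0, δ₀))
      ⟨hδ₀, fun i => by simpa using hKcone i _ (hc i) _ (hδ₀pos i)⟩ hδ₀pos hq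

/-- Closed convex hull of a conic mixed-binary set:
`cl conv(S(Δ, K)) = S(conv(Δ), cl(K))` under the assumptions of the theorem. -/
theorem closure_convexHull_conic_mixed_binary {n p : ℕ} (hp : 0 < p) (hpn : p ≤ n)
    (m k : Fin p → ℕ)
    (A : ∀ i : Fin p, (Fin (m i) → ℝ) →ₗ[ℝ] (Fin (k i) → ℝ))
    (B : ∀ i : Fin p, Fin (k i) → ℝ)
    (K : ∀ i : Fin p, Set (Fin (k i) → ℝ))
    (Δ : Set (Fin n → ℝ))
    (hΔ : ∀ δ ∈ Δ, ∀ j : Fin n, δ j = 0 ∨ δ j = 1)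
    (hKconv : ∀ i, Convex ℝ (K i))
    (hK0 : ∀ i, (0 : Fin (k i) → ℝ) ∈ K i)
    (hKcone : ∀ i, ∀ c ∈ K i, ∀ lam : ℝ, 0 < lam → lam • c ∈ K i)
    -- (a): for every `i` there is a point of `Δ` whose `i`-th coordinate is `1`
    (ha : ∀ i : Fin p, ∃ δ ∈ Δ, δ (Fin.castLE hpn i) = 1)
    -- (b): for `δ_i > 0`, membership in `cl(K i)` implies membership in `K i`
    (hb : ∀ i : Fin p, ∀ αi : Fin (m i) → ℝ, ∀ t : ℝ, 0 < t →
      A i αi + t • B i ∈ closure (K i) → A i αi + t • B i ∈ K i)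
    -- (c): `B i ∈ K i`
    (hc : ∀ i : Fin p, B i ∈ K i) :
    closure (convexHull ℝ {q : (∀ i : Fin p, Fin (m i) → ℝ) × (Fin n → ℝ) |
        q.2 ∈ Δ ∧ ∀ i : Fin p, A i (q.1 i) + q.2 (Fin.castLE hpn i) • B i ∈ K i})
      = {q : (∀ i : Fin p, Fin (m i) → ℝ) × (Fin n → ℝ) |
        q.2 ∈ convexHull ℝ Δ ∧
          ∀ i : Fin p, A i (q.1 i) + q.2 (Fin.castLE hpn i) • B i ∈ closure (K i)} :=
  closure_convexHull_conic_mixed_binary_general hpn m k A B K Δ hΔ hKconv hK0 hKcone ha hb hc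
end

section
/- Let U ⊆ ℝ^p be a nonempty convex set, A : ℝ^p → ℝ^m and B : ℝ^p → ℝ^r linear maps, b ∈ ℝ^r, and V = {μ ∈ ℝ^m : there exists η ∈ U with Aη = μ and Bη = b}. Suppose there exists η* in the relative interior of U with Bη* = b, and suppose that η = 0 is the only vector in the recession cone of the set {η ∈ cl(U) : Aη = 0, Bη = b}. Then cl(V) = {μ ∈ ℝ^m : there exists η ∈ cl(U) with Aη = μ and Bη = b}. -/
/-!
Write `S = {η ∈ cl U | Bη = b}`, so that the right-hand side is `A(S)`.

`A(S)` is closed: if `Aηₖ → μ` with `ηₖ ∈ S`, either a subsequence of `(ηₖ)` is bounded and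
converges to a preimage of `μ` in `S`, or `‖ηₖ‖ → ∞` and a limit point `v` of `ηₖ / ‖ηₖ‖` is a
unit vector with `Av = 0` in the recession cone of `S`, hence in that of `S ∩ ker A`, which is
excluded. Conversely, the segment from a point of `cl U` to a relative interior point of `U` lies
in `U` except possibly for its first endpoint; with both endpoints on `{Bη = b}` this shows
`S ⊆ cl (U ∩ {Bη = b})`, and applying the continuous map `A` gives `A(S) ⊆ cl V`.
-/

open Set Filter Topology

variable {E F : Type*} [NormedAddCommGroup E] [NormedSpace ℝ E]
  [NormedAddCommGroup F] [NormedSpace ℝ F]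

def recessionCone (S : Set E) : Set E :=
  {v | ∀ x ∈ S, ∀ t : ℝ, 0 ≤ t → x + t • v ∈ S}

theorem IsClosed.mem_recessionCone_of_tendsto {S : Set E} (hS : IsClosed S) (hconv : Convex ℝ S)
    {η : ℕ → E} (hη : ∀ k, η k ∈ S) (hnorm : Tendsto (fun k => ‖η k‖) atTop atTop) {v : E}
    (hv : Tendsto (fun k => ‖η k‖⁻¹ • η k) atTop (𝓝 v)) : v ∈ recessionCone S := by
  intro x hx t ht
  have hlim : Tendsto (fun k => x + (t * ‖η k‖⁻¹) • (η k - x)) atTop (𝓝 (x + t • v)) := by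
    have h := tendsto_const_nhds (x := x) |>.add
      ((hv.const_smul t).sub ((hnorm.inv_tendsto_atTop.const_mul t).smul_const x))
    simp only [mul_zero, zero_smul, sub_zero] at h
    refine h.congr fun k => ?_
    module
  refine hS.mem_of_tendsto hlim ?_
  filter_upwards [hnorm.eventually_ge_atTop (max t 1)] with k hk
  have hpos : 0 < ‖η k‖ := one_pos.trans_le ((le_max_right t 1).trans hk)
  refine hconv.add_smul_sub_mem hx (hη k) ⟨by positivity, ?_⟩
  rw [← div_eq_mul_inv, div_le_one hpos]
  exact (le_max_left t 1).trans hk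

variable [FiniteDimensional ℝ E]

theorem Convex.combo_closure_intrinsicInterior_mem {s : Set E} (hs : Convex ℝ s) {x y : E}
    (hx : x ∈ closure s) (hy : y ∈ intrinsicInterior ℝ s) {a b : ℝ} (ha : 0 ≤ a) (hb : 0 < b)
    (hab : a + b = 1) : a • x + b • y ∈ s := by
  obtain ⟨z, hz, rfl⟩ := mem_intrinsicInterior.mp hy
  obtain ⟨ε, hε, hball⟩ := Metric.isOpen_iff.mp isOpen_interior z hz
  obtain ⟨u, hu, hxu⟩ := Metric.mem_closure_iff.mp hx (ε * b) (mul_pos hε hb)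
  have hx_span : x ∈ affineSpan ℝ s :=
    (affineSpan ℝ s).closed_of_finiteDimensional.closure_subset_iff.mpr (subset_affineSpan ℝ s) hx
  -- `y'` is chosen so that `a • x + b • y = a • u + b • y'`; it is `ε`-close to `y` in the span.
  set y' : E := (a / b) • (x - u) + z
  have hy'_span : y' ∈ affineSpan ℝ s :=
    (affineSpan ℝ s).smul_vsub_vadd_mem (a / b) hx_span (subset_affineSpan ℝ s hu) z.2
  have hy' : y' ∈ s := by
    refine interior_subset (s := ((↑) : affineSpan ℝ s → E) ⁻¹' s)
      (hball (show (⟨y', hy'_span⟩ : affineSpan ℝ s) ∈ Metric.ball z ε from ?_))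
    rw [Metric.mem_ball, Subtype.dist_eq, dist_eq_norm, add_sub_cancel_right, norm_smul,
      Real.norm_of_nonneg (div_nonneg ha hb.le), ← dist_eq_norm]
    calc a / b * dist x u ≤ 1 / b * dist x u := by gcongr; linarith
      _ < 1 / b * (ε * b) := by gcongr
      _ = ε := by field_simp
  convert hs hu hy' ha hb.le hab using 1
  simp only [y', smul_add, smul_smul, mul_div_cancel₀ a hb.ne']
  module

theorem Convex.closure_inter_subset_closure_inter {U L : Set E} (hU : Convex ℝ U)
    (hL : Convex ℝ L) {y : E} (hyU : y ∈ intrinsicInterior ℝ U) (hyL : y ∈ L) :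
    closure U ∩ L ⊆ closure (U ∩ L) := by
  rintro x ⟨hxU, hxL⟩
  have hlim : Tendsto (AffineMap.lineMap (k := ℝ) y x) (𝓝[<] 1) (𝓝 x) :=
    (AffineMap.lineMap_continuous.tendsto' 1 x (by simp)).mono_left nhdsWithin_le_nhds
  refine mem_closure_of_tendsto hlim ?_
  filter_upwards [Ioo_mem_nhdsLT one_pos] with t ht
  rw [AffineMap.lineMap_apply_module, add_comm]
  have h1t : 0 < 1 - t := sub_pos.mpr ht.2
  exact ⟨hU.combo_closure_intrinsicInterior_mem hxU hyU ht.1.le h1t (by ring),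
    hL hxL hyL ht.1.le h1t.le (by ring)⟩

theorem exists_ne_zero_mem_recessionCone_of_tendsto_norm_atTop {S : Set E} (hS : IsClosed S)
    (hconv : Convex ℝ S) (A : E →ₗ[ℝ] F) {η : ℕ → E} (hη : ∀ k, η k ∈ S)
    (hnorm : Tendsto (fun k => ‖η k‖) atTop atTop) {μ : F}
    (hA : Tendsto (fun k => A (η k)) atTop (𝓝 μ)) :
    ∃ v ∈ recessionCone S, v ≠ 0 ∧ A v = 0 := by
  have hsphere : ∃ᶠ k in atTop, ‖η k‖⁻¹ • η k ∈ Metric.sphere (0 : E) 1 := by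
    refine (hnorm.eventually_gt_atTop 0).frequently.mono fun k hk => ?_
    simpa using norm_smul_inv_norm (𝕜 := ℝ) (norm_pos_iff.mp hk)
  obtain ⟨v, hv, φ, hφ, hlim⟩ :=
    tendsto_subseq_of_frequently_bounded Metric.isBounded_sphere hsphere
  rw [Metric.isClosed_sphere.closure_eq, mem_sphere_zero_iff_norm] at hv
  have hnormφ := hnorm.comp hφ.tendsto_atTop
  refine ⟨v, hS.mem_recessionCone_of_tendsto hconv (fun n => hη (φ n)) hnormφ hlim,
    norm_ne_zero_iff.mp (hv ▸ one_ne_zero), tendsto_nhds_unique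
      ((A.continuous_of_finiteDimensional.tendsto v).comp hlim) ?_⟩
  simpa [Function.comp_def] using hnormφ.inv_tendsto_atTop.smul (hA.comp hφ.tendsto_atTop)

theorem Convex.isClosed_image_of_recessionCone {S : Set E} (hconv : Convex ℝ S)
    (hS : IsClosed S) (A : E →ₗ[ℝ] F) (hker : ∀ v ∈ recessionCone S, A v = 0 → v = 0) :
    IsClosed (A '' S) := by
  refine IsSeqClosed.isClosed fun μs μ hμs hlim => ?_
  choose η hηS hAη using hμs
  replace hlim : Tendsto (fun k => A (η k)) atTop (𝓝 μ) := by simpa only [hAη] using hlim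
  by_cases hnorm : Tendsto (fun k => ‖η k‖) atTop atTop
  · obtain ⟨v, hv, hv0, hAv⟩ :=
      exists_ne_zero_mem_recessionCone_of_tendsto_norm_atTop hS hconv A hηS hnorm hlim
    exact absurd (hker v hv hAv) hv0
  simp only [tendsto_atTop, not_forall, not_eventually, not_le] at hnorm
  obtain ⟨M, hM⟩ := hnorm
  obtain ⟨x, -, φ, hφ, hx⟩ := tendsto_subseq_of_frequently_bounded
    (Metric.isBounded_closedBall (x := (0 : E)) (r := M))
    (hM.mono fun k hk => mem_closedBall_zero_iff.mpr hk.le)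
  exact ⟨x, hS.mem_of_tendsto hx (.of_forall fun n => hηS (φ n)), tendsto_nhds_unique
    ((A.continuous_of_finiteDimensional.tendsto x).comp hx) (hlim.comp hφ.tendsto_atTop)⟩

theorem closure_linear_image_general {p m r : ℕ}
    (U : Set (Fin p → ℝ)) (hUconv : Convex ℝ U)
    (A : (Fin p → ℝ) →ₗ[ℝ] (Fin m → ℝ)) (B : (Fin p → ℝ) →ₗ[ℝ] (Fin r → ℝ))
    (b : Fin r → ℝ)
    (hri : ∃ η ∈ intrinsicInterior ℝ U, B η = b)
    (hrec : ∀ v : Fin p → ℝ,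
      (∀ x ∈ {η ∈ closure U | A η = 0 ∧ B η = b}, ∀ t : ℝ, 0 ≤ t →
        x + t • v ∈ {η ∈ closure U | A η = 0 ∧ B η = b}) → v = 0) :
    closure {μ : Fin m → ℝ | ∃ η ∈ U, A η = μ ∧ B η = b}
      = {μ : Fin m → ℝ | ∃ η ∈ closure U, A η = μ ∧ B η = b} := by
  have himage (s : Set (Fin p → ℝ)) :
      {μ | ∃ η ∈ s, A η = μ ∧ B η = b} = A '' (s ∩ B ⁻¹' {b}) := by
    ext μ
    exact ⟨fun ⟨η, hη, hA, hB⟩ => ⟨η, ⟨hη, hB⟩, hA⟩, fun ⟨η, ⟨hη, hB⟩, hA⟩ => ⟨η, hη, hA, hB⟩⟩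
  have hL : Convex ℝ (B ⁻¹' {b}) := (convex_singleton b).linear_preimage B
  have hker : ∀ v ∈ recessionCone (closure U ∩ B ⁻¹' {b}), A v = 0 → v = 0 :=
    fun v hv hAv => hrec v fun x ⟨hxU, hxA, hxB⟩ t ht =>
      have hxt := hv x ⟨hxU, hxB⟩ t ht
      ⟨hxt.1, by simp [hxA, hAv], hxt.2⟩
  obtain ⟨y, hyU, hyB⟩ := hri
  rw [himage, himage]
  refine (closure_minimal (image_mono (inter_subset_inter_left _ subset_closure)) ?_).antisymm ?_
  · exact (hUconv.closure.inter hL).isClosed_image_of_recessionCone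
      (isClosed_closure.inter (isClosed_singleton.preimage B.continuous_of_finiteDimensional)) A hker
  · calc A '' (closure U ∩ B ⁻¹' {b}) ⊆ A '' closure (U ∩ B ⁻¹' {b}) :=
          image_mono (hUconv.closure_inter_subset_closure_inter hL hyU hyB)
      _ ⊆ closure (A '' (U ∩ B ⁻¹' {b})) :=
          image_closure_subset_closure_image A.continuous_of_finiteDimensional

/-- Closure of the image of a convex set under a linear map subject to a linear equation:
under a relative-interior (Slater-type) condition and a trivial-recession-cone condition,
`cl(V) = {μ : ∃ η ∈ cl(U), Aη = μ, Bη = b}`. -/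
theorem closure_linear_image {p m r : ℕ}
    (U : Set (Fin p → ℝ)) (hUne : U.Nonempty) (hUconv : Convex ℝ U)
    (A : (Fin p → ℝ) →ₗ[ℝ] (Fin m → ℝ)) (B : (Fin p → ℝ) →ₗ[ℝ] (Fin r → ℝ))
    (b : Fin r → ℝ)
    (hri : ∃ η ∈ intrinsicInterior ℝ U, B η = b)
    (hrec : ∀ v : Fin p → ℝ,
      (∀ x ∈ {η ∈ closure U | A η = 0 ∧ B η = b}, ∀ t : ℝ, 0 ≤ t →
        x + t • v ∈ {η ∈ closure U | A η = 0 ∧ B η = b}) → v = 0) :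
    closure {μ : Fin m → ℝ | ∃ η ∈ U, A η = μ ∧ B η = b}
      = {μ : Fin m → ℝ | ∃ η ∈ closure U, A η = μ ∧ B η = b} :=
  closure_linear_image_general U hUconv A B b hri hrec
end

section
/- Let T = {(τ, x, z) ∈ ℝ × ℝ^d × Z : h(aᵀx) ≤ τ and x_i(1 − z_i) = 0 for all i ∈ [d]}, where Z ⊆ {0,1}^d with Z ≠ {0}, the graph G_Z is connected, a ∈ ℝ^d has a_i ≠ 0 for all i, and h : ℝ → ℝ ∪ {+∞} is proper, lower semicontinuous, convex with h(0) = 0. Then for every (τ, x, z) in the closed convex hull of T and every x̄ ∈ ℝ^d with aᵀx̄ = 0, the point (τ, x + x̄, z) also lies in the closed convex hull of T. -/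
open scoped Classical

/-- The graph `G_Z` on `[d]` associated with `Z ⊆ {0,1}^d`: `i ∼ j` iff `i ≠ j` and
some `z ∈ Z` has `z i = z j = 1`. -/
def graphOfZ {d : ℕ} (Z : Set (Fin d → ℝ)) : SimpleGraph (Fin d) :=
  SimpleGraph.fromRel (fun i j => ∃ z ∈ Z, z i = 1 ∧ z j = 1)

/-!
If `z ∈ Z` has `z i = z j = 1` and `w` is supported on `{i, j}` with `aᵀw = 0`, then the whole
line `(0, t w, z)` lies in `T`, because `h(aᵀ(t w)) = h 0 = 0`. A convex set containing a ray
has the ray's direction as a recession direction of its closure, so `(0, w, 0)` is one for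
`cl conv T`. Recession directions are closed under addition, and when `G_Z` is connected every
`x̄` with `aᵀx̄ = 0` is a sum of such edge-supported vectors: writing `u_k = e_k / a_k`,
`x̄ = ∑_j a_j x̄_j (u_j - u_r)`, and each `u_j - u_r` telescopes along a walk from `j` to `r`.
-/

open Filter Topology Matrix

def recessionDirections {E : Type*} [AddMonoid E] (K : Set E) : AddSubmonoid E where
  carrier := {v | ∀ q ∈ K, q + v ∈ K}
  zero_mem' q hq := by simpa using hq
  add_mem' hv hw q hq := by rw [← add_assoc]; exact hw _ (hv q hq)

theorem mem_recessionDirections_closure_of_ray {E : Type*} [AddCommGroup E] [Module ℝ E]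
    [TopologicalSpace E] [IsTopologicalAddGroup E] [ContinuousSMul ℝ E] {C : Set E}
    (hC : Convex ℝ C) {y w : E} (hray : ∀ t : ℝ, 0 < t → y + t • w ∈ C) :
    w ∈ recessionDirections (closure C) := by
  -- `(1 - s) q + s (y + s⁻¹ w) = (1 - s) q + s y + w` tends to `q + w` as `s → 0⁺`.
  have hC_add : ∀ q ∈ C, q + w ∈ closure C := by
    intro q hq
    have hlim : Tendsto (fun s : ℝ => (1 - s) • q + s • y + w) (𝓝[>] 0) (𝓝 (q + w)) := by
      have hcont : Continuous fun s : ℝ => (1 - s) • q + s • y + w := by fun_prop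
      simpa using (hcont.tendsto 0).mono_left nhdsWithin_le_nhds
    refine mem_closure_of_tendsto hlim ?_
    filter_upwards [Ioo_mem_nhdsGT one_pos] with s ⟨hs0, hs1⟩
    have hmem := hC hq (hray s⁻¹ (inv_pos.2 hs0)) (sub_nonneg.2 hs1.le) hs0.le
      (sub_add_cancel 1 s)
    rwa [smul_add, smul_smul, mul_inv_cancel₀ hs0.ne', one_smul, ← add_assoc] at hmem
  intro q hq
  simpa only [closure_closure] using map_mem_closure (continuous_add_const w) hq hC_add

theorem SimpleGraph.Reachable.smul_sub_mem {ι R V : Type*} [Semiring R] [AddCommGroup V]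
    [Module R V] {G : SimpleGraph ι} {f : ι → V} {M : AddSubmonoid V}
    (hedge : ∀ i j, G.Adj i j → ∀ c : R, c • (f i - f j) ∈ M) {i j : ι} (hij : G.Reachable i j)
    (c : R) : c • (f i - f j) ∈ M := by
  obtain ⟨W⟩ := hij
  induction W with
  | nil => simp
  | cons hadj _ ih =>
    rw [← sub_add_sub_cancel, smul_add]
    exact M.add_mem (hedge _ _ hadj c) ih

theorem eq_sum_smul_single_inv_sub {ι : Type*} [Fintype ι] [DecidableEq ι] {a x : ι → ℝ}
    (ha : ∀ i, a i ≠ 0) (hx : a ⬝ᵥ x = 0) (r : ι) :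
    x = ∑ j, (a j * x j) • (Pi.single j (a j)⁻¹ - Pi.single r (a r)⁻¹) := by
  have hsingle : ∀ j, (a j * x j) • Pi.single j (a j)⁻¹ = Pi.single j (x j) := fun j => by
    rw [← Pi.single_smul', smul_eq_mul, mul_right_comm, mul_inv_cancel₀ (ha j), one_mul]
  simp only [smul_sub, Finset.sum_sub_distrib, hsingle, Finset.univ_sum_single,
    ← Finset.sum_smul]
  rw [show ∑ j, a j * x j = 0 from hx, zero_smul, sub_zero]

theorem SimpleGraph.Connected.mem_of_dotProduct_eq_zero {ι : Type*} [Fintype ι] [DecidableEq ι]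
    {G : SimpleGraph ι} (hG : G.Connected) {a : ι → ℝ} (ha : ∀ i, a i ≠ 0)
    (M : AddSubmonoid (ι → ℝ))
    (hM : ∀ i j, G.Adj i j → ∀ w : ι → ℝ, (∀ k, w k ≠ 0 → k = i ∨ k = j) → a ⬝ᵥ w = 0 → w ∈ M)
    {x : ι → ℝ} (hx : a ⬝ᵥ x = 0) : x ∈ M := by
  set u : ι → ι → ℝ := fun k => Pi.single k (a k)⁻¹
  have hedge : ∀ i j, G.Adj i j → ∀ c : ℝ, c • (u i - u j) ∈ M := by
    refine fun i j hij c => hM i j hij _ (fun k hk => ?_) ?_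
    · by_contra! hkij
      simp [u, hkij.1, hkij.2] at hk
    · simp [u, dotProduct_sub, dotProduct_single, mul_inv_cancel₀ (ha _)]
  obtain ⟨r⟩ := hG.nonempty
  rw [eq_sum_smul_single_inv_sub ha hx r]
  exact M.sum_mem fun j _ => (hG.preconnected j r).smul_sub_mem hedge _

section SupportEpigraph

variable {d : ℕ} (Z : Set (Fin d → ℝ)) (a : Fin d → ℝ) (h : ℝ → EReal)

def supportEpigraph : Set (ℝ × (Fin d → ℝ) × (Fin d → ℝ)) :=
  {p | p.2.2 ∈ Z ∧ h (a ⬝ᵥ p.2.1) ≤ (p.1 : EReal) ∧ ∀ i, p.2.1 i * (1 - p.2.2 i) = 0}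

variable {Z a h}

theorem line_mem_supportEpigraph (h0 : h 0 = 0) {z : Fin d → ℝ} (hz : z ∈ Z) {i j : Fin d}
    (hzi : z i = 1) (hzj : z j = 1) {w : Fin d → ℝ} (hw : ∀ k, w k ≠ 0 → k = i ∨ k = j)
    (haw : a ⬝ᵥ w = 0) (t : ℝ) : ((0 : ℝ), t • w, z) ∈ supportEpigraph Z a h := by
  refine ⟨hz, ?_, fun k => ?_⟩
  · simp [dotProduct_smul, haw, h0]
  · by_cases hwk : w k = 0
    · simp [hwk]
    · rcases hw k hwk with rfl | rfl <;> simp [hzi, hzj]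

theorem mem_recessionDirections_of_adj (h0 : h 0 = 0) {i j : Fin d} (hij : (graphOfZ Z).Adj i j)
    {w : Fin d → ℝ} (hw : ∀ k, w k ≠ 0 → k = i ∨ k = j) (haw : a ⬝ᵥ w = 0) :
    ((0 : ℝ), w, (0 : Fin d → ℝ)) ∈
      recessionDirections (closure (convexHull ℝ (supportEpigraph Z a h))) := by
  obtain ⟨z, hz, hzi, hzj⟩ : ∃ z ∈ Z, z i = 1 ∧ z j = 1 := by
    rcases ((SimpleGraph.fromRel_adj _ _ _).1 hij).2 with ⟨z, hz, h1, h2⟩ | ⟨z, hz, h1, h2⟩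
    exacts [⟨z, hz, h1, h2⟩, ⟨z, hz, h2, h1⟩]
  refine mem_recessionDirections_closure_of_ray (convex_convexHull ℝ _) (y := (0, 0, z))
    fun t _ => subset_convexHull ℝ _ ?_
  simpa using line_mem_supportEpigraph h0 hz hzi hzj hw haw t

end SupportEpigraph

theorem clconv_T_recession_general {d : ℕ}
    (Z : Set (Fin d → ℝ)) (hconn : (graphOfZ Z).Connected)
    (a : Fin d → ℝ) (ha : ∀ i, a i ≠ 0)
    (h : ℝ → EReal)
    (h0 : h 0 = 0) :
    ∀ p ∈ closure (convexHull ℝ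
      {p : ℝ × (Fin d → ℝ) × (Fin d → ℝ) |
        p.2.2 ∈ Z ∧ h (∑ i, a i * p.2.1 i) ≤ (p.1 : EReal) ∧
        ∀ i, p.2.1 i * (1 - p.2.2 i) = 0}),
    ∀ xbar : Fin d → ℝ, (∑ i, a i * xbar i) = 0 →
      (p.1, p.2.1 + xbar, p.2.2) ∈ closure (convexHull ℝ
        {p : ℝ × (Fin d → ℝ) × (Fin d → ℝ) |
          p.2.2 ∈ Z ∧ h (∑ i, a i * p.2.1 i) ≤ (p.1 : EReal) ∧
          ∀ i, p.2.1 i * (1 - p.2.2 i) = 0}) := by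
  intro p hp xbar hxbar
  let M := (recessionDirections (closure (convexHull ℝ (supportEpigraph Z a h)))).comap
    ((AddMonoidHom.inr ℝ _).comp (AddMonoidHom.inl (Fin d → ℝ) (Fin d → ℝ)))
  have hxM : xbar ∈ M := hconn.mem_of_dotProduct_eq_zero ha M
    (fun _ _ hij _ hw haw => mem_recessionDirections_of_adj h0 hij hw haw) hxbar
  have hshift : p + ((0 : ℝ), xbar, (0 : Fin d → ℝ)) ∈
      closure (convexHull ℝ (supportEpigraph Z a h)) := hxM p hp
  rw [show (p.1, p.2.1 + xbar, p.2.2) = p + ((0 : ℝ), xbar, (0 : Fin d → ℝ)) by ext <;> simp]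
  exact hshift

/-- Recessive directions of `cl conv(T)` in the connected-graph, unsigned case:
adding any `x̄` with `aᵀx̄ = 0` stays in `cl conv(T)`. -/
theorem clconv_T_recession {d : ℕ}
    (Z : Set (Fin d → ℝ)) (hZ01 : ∀ z ∈ Z, ∀ i, z i = 0 ∨ z i = 1)
    (hZne : Z ≠ {0}) (hconn : (graphOfZ Z).Connected)
    (a : Fin d → ℝ) (ha : ∀ i, a i ≠ 0)
    (h : ℝ → EReal)
    (hbot : ∀ x : ℝ, h x ≠ ⊥) (hnetop : ∃ x : ℝ, h x ≠ ⊤)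
    (hlsc : LowerSemicontinuous h)
    (hconv : Convex ℝ {u : ℝ × ℝ | h u.2 ≤ (u.1 : EReal)})
    (h0 : h 0 = 0) :
    ∀ p ∈ closure (convexHull ℝ
      {p : ℝ × (Fin d → ℝ) × (Fin d → ℝ) |
        p.2.2 ∈ Z ∧ h (∑ i, a i * p.2.1 i) ≤ (p.1 : EReal) ∧
        ∀ i, p.2.1 i * (1 - p.2.2 i) = 0}),
    ∀ xbar : Fin d → ℝ, (∑ i, a i * xbar i) = 0 →
      (p.1, p.2.1 + xbar, p.2.2) ∈ closure (convexHull ℝ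
        {p : ℝ × (Fin d → ℝ) × (Fin d → ℝ) |
          p.2.2 ∈ Z ∧ h (∑ i, a i * p.2.1 i) ≤ (p.1 : EReal) ∧
          ∀ i, p.2.1 i * (1 - p.2.2 i) = 0}) :=
  clconv_T_recession_general Z hconn a ha h h0
end

section
/- Let Z = {z ∈ {0,1}^d : Σ_{i∈[d]} z_i ≤ κ} for some κ ∈ {1, …, d}, and let Δ₁ = {(w, z) ∈ {0,1} × Z : w ≤ Σ_{i∈[d]} z_i}. Then conv(Δ₁) = {(w, z) ∈ [0,1]^{1+d} : w ≤ Σ_{i∈[d]} z_i and Σ_{i∈[d]} z_i ≤ κ}. -/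
/-!
The polytope on the right is compact and convex, so by Krein–Milman it is the closed convex hull
of its extreme points, and the convex hull of the finite set `Δ₁` is closed; it therefore suffices
that every extreme point is integral. At a point with a fractional coordinate there is a direction
`v ≠ 0` along which every tight constraint stays tight, so the point is the midpoint of
`q ± t • v` for small `t > 0`: take `(0, eᵢ - eⱼ)` for two fractional `zᵢ, zⱼ`; for a single
fractional `zᵢ` the sum `∑ z` is not an integer, hence `< κ`, and `(0, eᵢ)` works, or `(1, eᵢ)`
when `w = ∑ z` (then `w = zᵢ`); for fractional `w` with `z` integral, `∑ z ≥ 1 > w` and `(1, 0)`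
works.
-/

open Filter Topology Set

section ExtremePoints

variable {E : Type*} [AddCommGroup E] [Module ℝ E]

lemma eq_zero_of_mem_extremePoints_of_add_mem_of_sub_mem {A : Set E} {x v : E}
    (hx : x ∈ A.extremePoints ℝ) (hadd : x + v ∈ A) (hsub : x - v ∈ A) : v = 0 := by
  have hmid : x ∈ openSegment ℝ (x - v) (x + v) :=
    ⟨1 / 2, 1 / 2, by norm_num, by norm_num, by norm_num, by module⟩
  simpa using hx.2 hsub hadd hmid

lemma eq_zero_of_mem_extremePoints_of_eventually {A : Set E} {x v : E}
    (hx : x ∈ A.extremePoints ℝ) (h : ∀ᶠ t : ℝ in 𝓝 0, x + t • v ∈ A) : v = 0 := by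
  have hneg : ∀ᶠ t : ℝ in 𝓝 0, x + (-t) • v ∈ A :=
    (continuous_neg.tendsto' 0 0 neg_zero).eventually h
  obtain ⟨t, ⟨hadd, hsub⟩, ht⟩ :=
    (((h.and hneg).filter_mono nhdsWithin_le_nhds).and (self_mem_nhdsWithin (s := Ioi 0))).exists
  have := eq_zero_of_mem_extremePoints_of_add_mem_of_sub_mem hx hadd
    (by rwa [neg_smul, ← sub_eq_add_neg] at hsub)
  exact (smul_eq_zero.1 this).resolve_left (ne_of_gt ht)

variable [TopologicalSpace E] [IsTopologicalAddGroup E] [ContinuousSMul ℝ E]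
  [LocallyConvexSpace ℝ E] [T2Space E]

lemma subset_convexHull_of_extremePoints_subset {A S : Set E} (hAc : IsCompact A)
    (hAcv : Convex ℝ A) (hS : S.Finite) (hext : A.extremePoints ℝ ⊆ S) :
    A ⊆ convexHull ℝ S := by
  rw [← closure_convexHull_extremePoints hAc hAcv]
  exact closure_minimal (convexHull_mono hext) (hS.isClosed_convexHull ℝ)

end ExtremePoints

lemma eventually_le_add_mul {a b c : ℝ} (h : a ≤ b) (hc : c = 0 ∨ a < b) :
    ∀ᶠ t in 𝓝 0, a ≤ b + t * c := by
  rcases hc with rfl | hlt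
  · simpa using h
  · have : Tendsto (fun t => b + t * c) (𝓝 0) (𝓝 b) := by
      simpa using ((tendsto_id (x := 𝓝 (0 : ℝ))).mul_const c).const_add b
    exact (this.eventually (eventually_gt_nhds hlt)).mono fun _ => le_of_lt

lemma eventually_add_mul_le {a b c : ℝ} (h : b ≤ a) (hc : c = 0 ∨ b < a) :
    ∀ᶠ t in 𝓝 0, b + t * c ≤ a := by
  have := eventually_le_add_mul (neg_le_neg h) (hc.imp neg_eq_zero.2 neg_lt_neg)
  exact this.mono fun t ht => by linarith

lemma exists_nat_sum_eq_of_zero_or_one {ι : Type*} (s : Finset ι) {f : ι → ℝ}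
    (hf : ∀ i ∈ s, f i = 0 ∨ f i = 1) : ∃ n : ℕ, ∑ i ∈ s, f i = n :=
  Finset.sum_induction f (fun x => ∃ n : ℕ, x = n)
    (fun _ _ ⟨m, hm⟩ ⟨n, hn⟩ => ⟨m + n, by simp [hm, hn]⟩) ⟨0, by simp⟩
    fun i hi => (hf i hi).elim (fun h => ⟨0, by simp [h]⟩) fun h => ⟨1, by simp [h]⟩

lemma natCast_sub_natCast_notMem_Ioo (m n : ℕ) : (m : ℝ) - n ∉ Ioo 0 1 := by
  rintro ⟨h0, h1⟩
  have : n < m := by exact_mod_cast (by linarith : (n : ℝ) < m)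
  have : (n : ℝ) + 1 ≤ m := by exact_mod_cast this
  linarith

lemma eq_zero_or_eq_one_of_notMem_Ioo {x : ℝ} (hx : x ∈ Icc 0 1) (h : x ∉ Ioo 0 1) :
    x = 0 ∨ x = 1 := by
  rw [← Icc_sdiff_both] at h
  simpa [or_iff_not_imp_left] using not_and.1 h hx

def delta1 (d κ : ℕ) : Set (ℝ × (Fin d → ℝ)) :=
  {q | (q.1 = 0 ∨ q.1 = 1) ∧ ((∀ i, q.2 i = 0 ∨ q.2 i = 1) ∧ (∑ i, q.2 i) ≤ (κ : ℝ)) ∧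
    q.1 ≤ ∑ i, q.2 i}

def delta1Relaxation (d κ : ℕ) : Set (ℝ × (Fin d → ℝ)) :=
  {q | q.1 ∈ Icc (0 : ℝ) 1 ∧ (∀ i, q.2 i ∈ Icc (0 : ℝ) 1) ∧
    q.1 ≤ ∑ i, q.2 i ∧ (∑ i, q.2 i) ≤ (κ : ℝ)}

section Delta1

variable {d κ : ℕ}

lemma finite_delta1 : (delta1 d κ).Finite := by
  refine ((toFinite ({0, 1} : Set ℝ)).prod
    (Finite.pi' fun _ => toFinite ({0, 1} : Set ℝ))).subset ?_
  rintro q ⟨hw, ⟨hz, -⟩, -⟩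
  exact ⟨hw, fun i => hz i⟩

lemma delta1_subset_delta1Relaxation : delta1 d κ ⊆ delta1Relaxation d κ := by
  have h01 : ∀ x : ℝ, x = 0 ∨ x = 1 → x ∈ Icc 0 1 := by
    rintro x (rfl | rfl) <;> simp
  rintro q ⟨hw, ⟨hz, hsκ⟩, hws⟩
  exact ⟨h01 _ hw, fun i => h01 _ (hz i), hws, hsκ⟩

lemma sum_snd_add_smul {ι : Type*} [Fintype ι] (q v : ℝ × (ι → ℝ)) (t : ℝ) :
    ∑ i, (q + t • v).2 i = ∑ i, q.2 i + t * ∑ i, v.2 i := by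
  simp [Finset.sum_add_distrib, Finset.mul_sum]

lemma convex_delta1Relaxation : Convex ℝ (delta1Relaxation d κ) := by
  rintro x ⟨hx₁, hx₂, hx₃, hx₄⟩ y ⟨hy₁, hy₂, hy₃, hy₄⟩ a b ha hb hab
  have hsum : ∑ i, (a • x + b • y).2 i = a * ∑ i, x.2 i + b * ∑ i, y.2 i := by
    simp [Finset.sum_add_distrib, Finset.mul_sum]
  refine ⟨?_, fun i => ?_, ?_, ?_⟩
  · simpa using (convex_Icc (0 : ℝ) 1) hx₁ hy₁ ha hb hab
  · simpa using (convex_Icc (0 : ℝ) 1) (hx₂ i) (hy₂ i) ha hb hab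
  · rw [hsum]
    simpa using add_le_add (mul_le_mul_of_nonneg_left hx₃ ha) (mul_le_mul_of_nonneg_left hy₃ hb)
  · rw [hsum]
    nlinarith

lemma isCompact_delta1Relaxation : IsCompact (delta1Relaxation d κ) := by
  have hclosed : IsClosed (delta1Relaxation d κ) := by
    simp only [delta1Relaxation, ofPred_and, ofPred_forall]
    refine (isClosed_Icc.preimage continuous_fst).inter <|
      (isClosed_iInter fun i =>
        isClosed_Icc.preimage ((continuous_apply i).comp continuous_snd)).inter <|
      (isClosed_le continuous_fst ?_).inter (isClosed_le ?_ continuous_const) <;>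
    fun_prop
  have hbox := (isCompact_Icc (a := (0 : ℝ)) (b := 1)).prod
    (isCompact_univ_pi fun (_ : Fin d) => isCompact_Icc (a := (0 : ℝ)) (b := 1))
  refine hbox.of_isClosed_subset hclosed ?_
  rintro q ⟨hw, hz, -⟩
  exact ⟨hw, fun i _ => hz i⟩

lemma eventually_add_smul_mem_delta1Relaxation {q v : ℝ × (Fin d → ℝ)}
    (hq : q ∈ delta1Relaxation d κ) (hw : v.1 = 0 ∨ q.1 ∈ Ioo 0 1)
    (hz : ∀ i, v.2 i = 0 ∨ q.2 i ∈ Ioo 0 1)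
    (hws : v.1 = ∑ i, v.2 i ∨ q.1 < ∑ i, q.2 i) (hsκ : ∑ i, v.2 i = 0 ∨ ∑ i, q.2 i < κ) :
    ∀ᶠ t : ℝ in 𝓝 0, q + t • v ∈ delta1Relaxation d κ := by
  obtain ⟨⟨hw₀, hw₁⟩, hz₀₁, hws', hsκ'⟩ := hq
  have hz₀ := eventually_all.2 fun i =>
    eventually_le_add_mul (hz₀₁ i).1 ((hz i).imp_right (·.1))
  have hz₁ := eventually_all.2 fun i =>
    eventually_add_mul_le (hz₀₁ i).2 ((hz i).imp_right (·.2))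
  filter_upwards [eventually_le_add_mul hw₀ (hw.imp_right (·.1)),
    eventually_add_mul_le hw₁ (hw.imp_right (·.2)), hz₀, hz₁,
    eventually_le_add_mul (sub_nonneg.2 hws') (hws.imp (sub_eq_zero.2 ·.symm) sub_pos.2),
    eventually_add_mul_le hsκ' hsκ] with t hw₀ hw₁ hz₀ hz₁ hws hsκ
  simp only [delta1Relaxation, mem_ofPred_eq, sum_snd_add_smul]
  simp only [mem_Icc, Prod.fst_add, Prod.snd_add, Prod.smul_fst, Prod.smul_snd, Pi.add_apply,
    Pi.smul_apply, smul_eq_mul]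
  exact ⟨⟨hw₀, hw₁⟩, fun i => ⟨hz₀ i, hz₁ i⟩, by linarith [mul_sub t (∑ i, v.2 i) v.1], hsκ⟩

namespace delta1Relaxation

variable {q : ℝ × (Fin d → ℝ)}

lemma eq_of_snd_mem_Ioo (hq : q ∈ (delta1Relaxation d κ).extremePoints ℝ) {i j : Fin d}
    (hi : q.2 i ∈ Ioo 0 1) (hj : q.2 j ∈ Ioo 0 1) : i = j := by
  by_contra hij
  let v : ℝ × (Fin d → ℝ) := (0, Pi.single i 1 - Pi.single j 1)
  have hz : ∀ k, v.2 k = 0 ∨ q.2 k ∈ Ioo 0 1 := by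
    intro k
    by_cases hki : k = i
    · exact .inr (hki ▸ hi)
    by_cases hkj : k = j
    · exact .inr (hkj ▸ hj)
    exact .inl (by simp [v, hki, hkj])
  have hv : v = 0 := eq_zero_of_mem_extremePoints_of_eventually hq <|
    eventually_add_smul_mem_delta1Relaxation hq.1 (.inl rfl) hz (.inl (by simp [v]))
      (.inl (by simp [v]))
  simpa [v, hij] using congrArg (·.2 i) hv

lemma snd_notMem_Ioo_of_forall_ne (hq : q ∈ (delta1Relaxation d κ).extremePoints ℝ) {i : Fin d}
    (hint : ∀ j ≠ i, q.2 j = 0 ∨ q.2 j = 1) : q.2 i ∉ Ioo 0 1 := by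
  intro hi
  obtain ⟨n, hn⟩ := exists_nat_sum_eq_of_zero_or_one (Finset.univ.erase i)
    fun j hj => hint j (Finset.ne_of_mem_erase hj)
  have hsum : ∑ j, q.2 j = q.2 i + n := by
    rw [← Finset.add_sum_erase _ _ (Finset.mem_univ i), hn]
  have hsκ : ∑ j, q.2 j < κ := lt_of_le_of_ne hq.1.2.2.2 fun h =>
    natCast_sub_natCast_notMem_Ioo κ n (by rwa [← h, hsum, add_sub_cancel_right])
  have hperturb : ∀ c : ℝ, (c = 0 ∨ q.1 ∈ Ioo 0 1) → (c = 1 ∨ q.1 < ∑ j, q.2 j) → False := by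
    intro c hc hcs
    let v : ℝ × (Fin d → ℝ) := (c, Pi.single i 1)
    have hz : ∀ k, v.2 k = 0 ∨ q.2 k ∈ Ioo 0 1 := by
      intro k
      by_cases hki : k = i
      · exact .inr (hki ▸ hi)
      exact .inl (by simp [v, hki])
    have hv : v = 0 := eq_zero_of_mem_extremePoints_of_eventually hq <|
      eventually_add_smul_mem_delta1Relaxation hq.1 hc hz (hcs.imp_left (by simp [v, ·]))
        (.inr hsκ)
    simpa [v] using congrArg (·.2 i) hv
  rcases hq.1.2.2.1.lt_or_eq with hlt | heq
  · exact hperturb 0 (.inl rfl) (.inr hlt)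
  · have hn : n = 0 := by
      have : (n : ℝ) < 1 := by linarith [hq.1.1.2, hi.1]
      exact Nat.lt_one_iff.1 (by exact_mod_cast this)
    exact hperturb 1 (.inr (by rwa [heq, hsum, hn, Nat.cast_zero, add_zero])) (.inl rfl)

lemma snd_eq_zero_or_one (hq : q ∈ (delta1Relaxation d κ).extremePoints ℝ) (i : Fin d) :
    q.2 i = 0 ∨ q.2 i = 1 :=
  eq_zero_or_eq_one_of_notMem_Ioo (hq.1.2.1 i) fun hi =>
    snd_notMem_Ioo_of_forall_ne hq (fun j hji => eq_zero_or_eq_one_of_notMem_Ioo (hq.1.2.1 j)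
      fun hj => hji (eq_of_snd_mem_Ioo hq hj hi)) hi

lemma fst_eq_zero_or_one (hq : q ∈ (delta1Relaxation d κ).extremePoints ℝ) :
    q.1 = 0 ∨ q.1 = 1 := by
  refine eq_zero_or_eq_one_of_notMem_Ioo hq.1.1 fun hw => ?_
  obtain ⟨n, hn⟩ :=
    exists_nat_sum_eq_of_zero_or_one Finset.univ fun i _ => snd_eq_zero_or_one hq i
  have hws : q.1 < ∑ i, q.2 i := by
    have hn0 : (0 : ℝ) < n := hw.1.trans_le (hn ▸ hq.1.2.2.1)
    have hn1 : (1 : ℝ) ≤ n := Nat.one_le_cast.2 (Nat.cast_pos.1 hn0)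
    linarith [hw.2]
  have hv : ((1 : ℝ), (0 : Fin d → ℝ)) = 0 := eq_zero_of_mem_extremePoints_of_eventually hq <|
    eventually_add_smul_mem_delta1Relaxation hq.1 (.inr hw) (fun _ => .inl rfl) (.inr hws)
      (.inl (by simp))
  simpa using congrArg Prod.fst hv

end delta1Relaxation

lemma extremePoints_delta1Relaxation_subset_delta1 :
    (delta1Relaxation d κ).extremePoints ℝ ⊆ delta1 d κ := fun _ hq =>
  ⟨delta1Relaxation.fst_eq_zero_or_one hq,
    ⟨delta1Relaxation.snd_eq_zero_or_one hq, hq.1.2.2.2⟩, hq.1.2.2.1⟩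

end Delta1

theorem convexHull_Delta1_cardinality_general {d : ℕ} (κ : ℕ) :
    convexHull ℝ {q : ℝ × (Fin d → ℝ) |
        (q.1 = 0 ∨ q.1 = 1) ∧
        ((∀ i, q.2 i = 0 ∨ q.2 i = 1) ∧ (∑ i, q.2 i) ≤ (κ : ℝ)) ∧
        q.1 ≤ ∑ i, q.2 i}
      = {q : ℝ × (Fin d → ℝ) |
        q.1 ∈ Set.Icc (0 : ℝ) 1 ∧ (∀ i, q.2 i ∈ Set.Icc (0 : ℝ) 1) ∧
        q.1 ≤ ∑ i, q.2 i ∧ (∑ i, q.2 i) ≤ (κ : ℝ)} :=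
  (convexHull_min delta1_subset_delta1Relaxation convex_delta1Relaxation).antisymm <|
    subset_convexHull_of_extremePoints_subset isCompact_delta1Relaxation convex_delta1Relaxation
      finite_delta1 extremePoints_delta1Relaxation_subset_delta1

/-- Convex hull of `Δ₁` for the cardinality constraint set
`Z = {z ∈ {0,1}^d : 1ᵀz ≤ κ}`. -/
theorem convexHull_Delta1_cardinality {d : ℕ} (κ : ℕ) (hκ1 : 1 ≤ κ) (hκd : κ ≤ d) :
    convexHull ℝ {q : ℝ × (Fin d → ℝ) |
        (q.1 = 0 ∨ q.1 = 1) ∧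
        ((∀ i, q.2 i = 0 ∨ q.2 i = 1) ∧ (∑ i, q.2 i) ≤ (κ : ℝ)) ∧
        q.1 ≤ ∑ i, q.2 i}
      = {q : ℝ × (Fin d → ℝ) |
        q.1 ∈ Set.Icc (0 : ℝ) 1 ∧ (∀ i, q.2 i ∈ Set.Icc (0 : ℝ) 1) ∧
        q.1 ≤ ∑ i, q.2 i ∧ (∑ i, q.2 i) ≤ (κ : ℝ)} :=
  convexHull_Delta1_cardinality_general κ
end

section
/- Let Z = {z ∈ {0,1}^d : z_d ≤ Σ_{i∈[d−1]} z_i} with d ≥ 2, and let Δ₁ = {(w, z) ∈ {0,1} × Z : w ≤ Σ_{i∈[d]} z_i}. Then conv(Δ₁) = {(w, z) ∈ [0,1]^{1+d} : w ≤ Σ_{i∈[d−1]} z_i and z_d ≤ Σ_{i∈[d−1]} z_i}. -/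
/-!
Both sides are compact and convex, so by Krein–Milman it suffices that every extreme point `q`
of the polytope is a 0/1 point. If `q` had a fractional coordinate we exhibit a nonzero direction
`v` keeping every tight constraint tight; then `q ± ε v` stays in the polytope for small `ε`, so
`q` is not extreme. With `s = ∑_{i ≠ k} z_i`: two fractional `z_i, z_j` (`i, j ≠ k`) are traded
against each other; a single one makes `s` fractional, so it moves together with `w` and `z_k`
whenever these equal `s`; if there is none, `s` is an integer, so a fractional `w` or `z_k` lies
strictly below `s` and moves alone.
-/

open Filter Topology Set

namespace WeakHierarchy

theorem exists_sum_eq_natCast {α : Type*} {s : Finset α} {f : α → ℝ}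
    (h : ∀ i ∈ s, f i = 0 ∨ f i = 1) : ∃ n : ℕ, ∑ i ∈ s, f i = n := by
  classical
  refine ⟨(s.filter fun i => f i = 1).card, ?_⟩
  rw [← Finset.sum_boole]
  refine Finset.sum_congr rfl fun i hi => ?_
  rcases h i hi with h | h <;> simp [h]

theorem natCast_ne_add_natCast {x : ℝ} (hx : x ∈ Ioo 0 1) (a b : ℕ) : (a : ℝ) ≠ x + b := by
  rcases le_or_gt a b with hab | hab
  · have : (a : ℝ) ≤ b := by exact_mod_cast hab
    linarith [hx.1]
  · have : (b : ℝ) + 1 ≤ a := by exact_mod_cast hab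
    linarith [hx.2]

theorem eq_zero_or_eq_one_of_mem_Icc {x : ℝ} (hx : x ∈ Icc 0 1) (h : x ∉ Ioo 0 1) :
    x = 0 ∨ x = 1 := by
  have : x ∈ Icc (0 : ℝ) 1 \ Ioo 0 1 := ⟨hx, h⟩
  rwa [Icc_sdiff_Ioo_same zero_le_one, mem_insert_iff, mem_singleton_iff] at this

theorem not_eq_zero_or_eq_one_of_mem_Ioo {x : ℝ} (hx : x ∈ Ioo 0 1) : ¬(x = 0 ∨ x = 1) := by
  rintro (rfl | rfl) <;> simp at hx

theorem eventually_add_mul_le_add_mul {a b a' b' : ℝ} (h : a ≤ b) (h' : a = b → a' = b') :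
    ∀ᶠ ε in 𝓝 (0 : ℝ), a + ε * a' ≤ b + ε * b' := by
  rcases h.eq_or_lt with rfl | hlt
  · simp [h' rfl]
  · have hc (c c' : ℝ) : Tendsto (fun ε => c + ε * c') (𝓝 0) (𝓝 c) := by
      simpa using (by fun_prop : Continuous fun ε : ℝ => c + ε * c').tendsto 0
    exact ((hc a a').eventually_lt (hc b b') hlt).mono fun _ => le_of_lt

theorem eventually_add_mul_mem_Icc {x v : ℝ} (hx : x ∈ Icc 0 1) (hv : x = 0 ∨ x = 1 → v = 0) :
    ∀ᶠ ε in 𝓝 (0 : ℝ), x + ε * v ∈ Icc 0 1 := by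
  filter_upwards [eventually_add_mul_le_add_mul (a' := 0) hx.1 fun h => (hv (.inl h.symm)).symm,
    eventually_add_mul_le_add_mul (b' := 0) hx.2 fun h => hv (.inr h)] with ε h0 h1
  simp only [mul_zero, add_zero] at h0 h1
  exact ⟨h0, h1⟩

theorem eq_zero_of_mem_extremePoints_of_eventually_add_smul_mem {E : Type*} [AddCommGroup E]
    [Module ℝ E] {A : Set E} {x v : E} (hx : x ∈ A.extremePoints ℝ)
    (h : ∀ᶠ ε in 𝓝 (0 : ℝ), x + ε • v ∈ A) : v = 0 := by
  have hneg : ∀ᶠ ε in 𝓝 (0 : ℝ), x + (-ε) • v ∈ A :=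
    (continuous_neg.tendsto' (0 : ℝ) 0 neg_zero).eventually h
  obtain ⟨ε, ⟨hplus, hminus⟩, hε⟩ :=
    (((h.and hneg).filter_mono nhdsWithin_le_nhds).and
      (self_mem_nhdsWithin : {ε : ℝ | ε ≠ 0} ∈ 𝓝[≠] 0)).exists
  rw [neg_smul, ← sub_eq_add_neg] at hminus
  have := hx.2 hplus hminus (mem_openSegment_add_sub x (ε • v))
  rw [add_eq_left, smul_eq_zero] at this
  exact this.resolve_left hε

variable {ι : Type*} [Fintype ι] [DecidableEq ι]

/-- A point `q = (w, z)`; the distinguished index `k` plays the role of the last index `d`. -/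
def delta1 (k : ι) : Set (ℝ × (ι → ℝ)) :=
  {q | (q.1 = 0 ∨ q.1 = 1) ∧
    ((∀ i, q.2 i = 0 ∨ q.2 i = 1) ∧ q.2 k ≤ ∑ i ∈ Finset.univ.erase k, q.2 i) ∧
    q.1 ≤ ∑ i, q.2 i}

def delta1Polytope (k : ι) : Set (ℝ × (ι → ℝ)) :=
  {q | q.1 ∈ Icc 0 1 ∧ (∀ i, q.2 i ∈ Icc 0 1) ∧
    q.1 ≤ ∑ i ∈ Finset.univ.erase k, q.2 i ∧ q.2 k ≤ ∑ i ∈ Finset.univ.erase k, q.2 i}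

theorem finite_delta1 (k : ι) : (delta1 k).Finite := by
  refine ((finite_singleton 1).insert 0 |>.prod
    (Finite.pi' fun _ => (finite_singleton 1).insert 0)).subset ?_
  rintro q ⟨hw, ⟨hz, -⟩, -⟩
  exact ⟨hw, hz⟩

theorem delta1_subset_delta1Polytope (k : ι) : delta1 k ⊆ delta1Polytope k := by
  have hIcc {x : ℝ} (hx : x = 0 ∨ x = 1) : x ∈ Icc 0 1 := by rcases hx with rfl | rfl <;> simp
  rintro q ⟨hw, ⟨hz, hk⟩, hsum⟩
  refine ⟨hIcc hw, fun i => hIcc (hz i), ?_, hk⟩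
  obtain ⟨n, hn⟩ := exists_sum_eq_natCast fun i (_ : i ∈ Finset.univ.erase k) => hz i
  rw [← Finset.sum_erase_add _ _ (Finset.mem_univ k)] at hsum
  rw [hn] at hsum hk ⊢
  rcases hw with hw | hw <;> rw [hw]
  · positivity
  · rcases n.eq_zero_or_pos with rfl | hpos
    · push_cast at hk hsum
      linarith
    · exact_mod_cast hpos

theorem convex_delta1Polytope (k : ι) : Convex ℝ (delta1Polytope k) := by
  rintro q ⟨hw, hz, hwk, hk⟩ r ⟨hw', hz', hwk', hk'⟩ a b ha hb hab
  have hsum : ∑ i ∈ Finset.univ.erase k, (a • q + b • r).2 i =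
      a * ∑ i ∈ Finset.univ.erase k, q.2 i + b * ∑ i ∈ Finset.univ.erase k, r.2 i := by
    simp only [Prod.snd_add, Prod.smul_snd, Pi.add_apply, Pi.smul_apply, smul_eq_mul,
      Finset.sum_add_distrib, Finset.mul_sum]
  refine ⟨convex_Icc 0 1 hw hw' ha hb hab, fun i => convex_Icc 0 1 (hz i) (hz' i) ha hb hab,
    ?_, ?_⟩ <;> rw [hsum] <;> simp only [Prod.fst_add, Prod.snd_add, Prod.smul_fst,
      Prod.smul_snd, Pi.add_apply, Pi.smul_apply, smul_eq_mul] <;> gcongr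

theorem isCompact_delta1Polytope (k : ι) : IsCompact (delta1Polytope k) := by
  refine (isCompact_Icc (a := ((0 : ℝ), (0 : ι → ℝ))) (b := (1, 1))).of_isClosed_subset ?_
    fun q ⟨hw, hz, _⟩ => ⟨⟨hw.1, fun i => (hz i).1⟩, hw.2, fun i => (hz i).2⟩
  simp only [delta1Polytope, ofPred_and, ofPred_forall, mem_Icc]
  refine .inter (.inter (isClosed_le ?_ ?_) (isClosed_le ?_ ?_))
    (.inter (isClosed_iInter fun i => .inter (isClosed_le ?_ ?_) (isClosed_le ?_ ?_))
      (.inter (isClosed_le ?_ ?_) (isClosed_le ?_ ?_))) <;> fun_prop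

section extremePoints

variable {k : ι} {q : ℝ × (ι → ℝ)}

theorem eq_zero_of_mem_extremePoints_delta1Polytope (hq : q ∈ (delta1Polytope k).extremePoints ℝ)
    {v : ℝ × (ι → ℝ)} (hw : q.1 = 0 ∨ q.1 = 1 → v.1 = 0)
    (hz : ∀ i, q.2 i = 0 ∨ q.2 i = 1 → v.2 i = 0)
    (hwk : q.1 = ∑ i ∈ Finset.univ.erase k, q.2 i → v.1 = ∑ i ∈ Finset.univ.erase k, v.2 i)
    (hk : q.2 k = ∑ i ∈ Finset.univ.erase k, q.2 i → v.2 k = ∑ i ∈ Finset.univ.erase k, v.2 i) :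
    v = 0 := by
  obtain ⟨hqw, hqz, hqwk, hqk⟩ := hq.1
  refine eq_zero_of_mem_extremePoints_of_eventually_add_smul_mem hq ?_
  have hsum (ε : ℝ) : ∑ i ∈ Finset.univ.erase k, (q + ε • v).2 i =
      ∑ i ∈ Finset.univ.erase k, q.2 i + ε * ∑ i ∈ Finset.univ.erase k, v.2 i := by
    simp only [Prod.snd_add, Prod.smul_snd, Pi.add_apply, Pi.smul_apply, smul_eq_mul,
      Finset.sum_add_distrib, Finset.mul_sum]
  filter_upwards [eventually_add_mul_mem_Icc hqw hw,
    eventually_all.2 fun i => eventually_add_mul_mem_Icc (hqz i) (hz i),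
    eventually_add_mul_le_add_mul hqwk hwk, eventually_add_mul_le_add_mul hqk hk]
    with ε hεw hεz hεwk hεk
  exact ⟨hεw, hεz, (hsum ε).symm ▸ hεwk, (hsum ε).symm ▸ hεk⟩

theorem notMem_Ioo_of_mem_extremePoints_delta1Polytope
    (hq : q ∈ (delta1Polytope k).extremePoints ℝ) {i j : ι} (hik : i ≠ k) (hjk : j ≠ k)
    (hij : i ≠ j) (hi : q.2 i ∈ Ioo 0 1) : q.2 j ∉ Ioo 0 1 := by
  intro hj
  have hv := eq_zero_of_mem_extremePoints_delta1Polytope hq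
    (v := (0, Pi.single i 1 - Pi.single j 1)) (fun _ => rfl) (fun l hl => ?_) (fun _ => ?_)
    (fun _ => ?_)
  · simpa [hij] using congrFun (congrArg Prod.snd hv) i
  · have hli : l ≠ i := fun h => not_eq_zero_or_eq_one_of_mem_Ioo hi (h ▸ hl)
    have hlj : l ≠ j := fun h => not_eq_zero_or_eq_one_of_mem_Ioo hj (h ▸ hl)
    simp [hli, hlj]
  · simp [Finset.sum_sub_distrib, hik, hjk]
  · simp [Finset.sum_sub_distrib, hik, hjk, hik.symm, hjk.symm]

theorem exists_mem_Ioo_of_mem_extremePoints_delta1Polytope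
    (hq : q ∈ (delta1Polytope k).extremePoints ℝ) {i : ι} (hik : i ≠ k)
    (hi : q.2 i ∈ Ioo 0 1) : ∃ j, j ≠ k ∧ j ≠ i ∧ q.2 j ∈ Ioo 0 1 := by
  by_contra! h
  set s := ∑ l ∈ Finset.univ.erase k, q.2 l with hs
  obtain ⟨n, hn⟩ := exists_sum_eq_natCast (s := (Finset.univ.erase k).erase i) (f := q.2)
    fun j hj => eq_zero_or_eq_one_of_mem_Icc (hq.1.2.1 j)
      (h j (Finset.ne_of_mem_erase (Finset.mem_of_mem_erase hj)) (Finset.ne_of_mem_erase hj))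
  have hs' : s = q.2 i + n := by
    rw [hs, ← Finset.add_sum_erase _ _ (Finset.mem_erase.2 ⟨hik, Finset.mem_univ i⟩), hn]
  have hne (x : ℝ) (hx : x = 0 ∨ x = 1) : x ≠ s := by
    rcases hx with rfl | rfl <;> rw [hs']
    · exact_mod_cast natCast_ne_add_natCast hi 0 n
    · exact_mod_cast natCast_ne_add_natCast hi 1 n
  have hv := eq_zero_of_mem_extremePoints_delta1Polytope hq
    (v := (if q.1 = s then 1 else 0, Pi.single i 1 + Pi.single k (if q.2 k = s then 1 else 0)))
    (fun hw => if_neg (hne _ hw)) (fun l hl => ?_) (fun hw => ?_) (fun hk => ?_)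
  · simpa [hik] using congrFun (congrArg Prod.snd hv) i
  · have hli : l ≠ i := fun h => not_eq_zero_or_eq_one_of_mem_Ioo hi (h ▸ hl)
    by_cases hlk : l = k
    · subst hlk
      simp [hli, hne _ hl]
    · simp [hli, hlk]
  · rw [← hs] at hw
    simp [Finset.sum_add_distrib, hik, hw]
  · rw [← hs] at hk
    simp [Finset.sum_add_distrib, hik, hik.symm, hk]

theorem eq_zero_or_eq_one_of_mem_extremePoints_delta1Polytope_of_ne
    (hq : q ∈ (delta1Polytope k).extremePoints ℝ) {i : ι} (hik : i ≠ k) :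
    q.2 i = 0 ∨ q.2 i = 1 := by
  refine eq_zero_or_eq_one_of_mem_Icc (hq.1.2.1 i) fun hi => ?_
  obtain ⟨j, hjk, hji, hj⟩ := exists_mem_Ioo_of_mem_extremePoints_delta1Polytope hq hik hi
  exact notMem_Ioo_of_mem_extremePoints_delta1Polytope hq hik hjk hji.symm hi hj

theorem eq_zero_or_eq_one_of_mem_extremePoints_delta1Polytope
    (hq : q ∈ (delta1Polytope k).extremePoints ℝ) :
    (q.1 = 0 ∨ q.1 = 1) ∧ (q.2 k = 0 ∨ q.2 k = 1) := by
  obtain ⟨n, hn⟩ := exists_sum_eq_natCast fun i hi =>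
    eq_zero_or_eq_one_of_mem_extremePoints_delta1Polytope_of_ne hq (Finset.ne_of_mem_erase hi)
  have hne {x : ℝ} (hx : x ∈ Ioo 0 1) : x ≠ ∑ i ∈ Finset.univ.erase k, q.2 i := by
    rw [hn]
    simpa [eq_comm] using natCast_ne_add_natCast hx n 0
  constructor
  · refine eq_zero_or_eq_one_of_mem_Icc hq.1.1 fun hw => ?_
    have hv := eq_zero_of_mem_extremePoints_delta1Polytope hq (v := (1, 0))
      (absurd · (not_eq_zero_or_eq_one_of_mem_Ioo hw)) (fun _ _ => rfl) (absurd · (hne hw))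
      (fun _ => by simp)
    simpa using congrArg Prod.fst hv
  · refine eq_zero_or_eq_one_of_mem_Icc (hq.1.2.1 k) fun hk => ?_
    have hv := eq_zero_of_mem_extremePoints_delta1Polytope hq (v := (0, Pi.single k 1))
      (fun _ => rfl) (fun l hl => ?_) (fun _ => by simp) (absurd · (hne hk))
    · simpa using congrFun (congrArg Prod.snd hv) k
    · have hlk : l ≠ k := fun h => not_eq_zero_or_eq_one_of_mem_Ioo hk (h ▸ hl)
      simp [hlk]

theorem extremePoints_delta1Polytope_subset (k : ι) :
    (delta1Polytope k).extremePoints ℝ ⊆ delta1 k := by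
  intro q hq
  obtain ⟨hw, hk⟩ := eq_zero_or_eq_one_of_mem_extremePoints_delta1Polytope hq
  have hz (i : ι) : q.2 i = 0 ∨ q.2 i = 1 := by
    rcases eq_or_ne i k with rfl | hik
    exacts [hk, eq_zero_or_eq_one_of_mem_extremePoints_delta1Polytope_of_ne hq hik]
  refine ⟨hw, ⟨hz, hq.1.2.2.2⟩, ?_⟩
  rw [← Finset.sum_erase_add _ _ (Finset.mem_univ k)]
  linarith [hq.1.2.2.1, (hq.1.2.1 k).1]

end extremePoints

theorem convexHull_delta1 (k : ι) : convexHull ℝ (delta1 k) = delta1Polytope k := by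
  refine (convexHull_min (delta1_subset_delta1Polytope k) (convex_delta1Polytope k)).antisymm ?_
  calc delta1Polytope k
      = closure (convexHull ℝ ((delta1Polytope k).extremePoints ℝ)) :=
        (closure_convexHull_extremePoints (isCompact_delta1Polytope k)
          (convex_delta1Polytope k)).symm
    _ ⊆ closure (convexHull ℝ (delta1 k)) :=
        closure_mono (convexHull_mono (extremePoints_delta1Polytope_subset k))
    _ = convexHull ℝ (delta1 k) := ((finite_delta1 k).isClosed_convexHull (𝕜 := ℝ)).closure_eq

end WeakHierarchy

/-- Convex hull of `Δ₁` for the weak hierarchy set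
`Z = {z ∈ {0,1}^d : z_d ≤ Σ_{i ∈ [d-1]} z_i}`. -/
theorem convexHull_Delta1_weak_hierarchy {d : ℕ} (hd : 2 ≤ d) :
    convexHull ℝ {q : ℝ × (Fin d → ℝ) |
        (q.1 = 0 ∨ q.1 = 1) ∧
        ((∀ i, q.2 i = 0 ∨ q.2 i = 1) ∧
          q.2 ⟨d - 1, by omega⟩ ≤ ∑ i ∈ Finset.univ.erase ⟨d - 1, by omega⟩, q.2 i) ∧
        q.1 ≤ ∑ i, q.2 i}
      = {q : ℝ × (Fin d → ℝ) |
        q.1 ∈ Set.Icc (0 : ℝ) 1 ∧ (∀ i, q.2 i ∈ Set.Icc (0 : ℝ) 1) ∧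
        q.1 ≤ (∑ i ∈ Finset.univ.erase ⟨d - 1, by omega⟩, q.2 i) ∧
        q.2 ⟨d - 1, by omega⟩ ≤ ∑ i ∈ Finset.univ.erase ⟨d - 1, by omega⟩, q.2 i} :=
  WeakHierarchy.convexHull_delta1 _
end
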